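/- arXiv:1212.3256 — 12 statements merged into one kernel-verified Lean document; each statement's English description precedes it below -/
import Mathlib

section
/- Let α be a positive root and set I_α = {α} ∪ {β ∈ Δ⁺ : α − β ∈ Δ⁺}. Then the subgroup ℤ·I_α of the root lattice generated by I_α contains every simple root belonging to Supp α; that is, Supp α ⊆ ℤ-span(I_α). -/
open scoped RealInnerProductSpace

/-!
Induction on the height of `α`. If `α` is not simple, some simple root `δ₀ ∈ Supp α` has
`⟪α, δ₀⟫ > 0`, so `α - δ₀` is a positive root of smaller height and `δ₀ ∈ I_α`; it remains to see
`I_{α - δ₀} ⊆ ℤ I_α`. For `μ ∈ I_{α - δ₀}` write `α - δ₀ = μ + ν`. If neither `μ + δ₀` nor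
`ν + δ₀` were a root, `δ₀` would have nonnegative inner product with `μ` and `ν`, while
`⟪μ + ν, μ⟫ + ⟪μ + ν, ν⟫ > 0` forces `⟪α, μ⟫ > 0` or `⟪α, ν⟫ > 0`, making `α - μ = ν + δ₀` or
`α - ν = μ + δ₀` a root. Hence `μ ∈ I_α` or `μ = (μ + δ₀) - δ₀` with both terms in `I_α`.
-/

open Submodule

section RootSystem

variable {E : Type*} [NormedAddCommGroup E] [InnerProductSpace ℝ E]

structure IsCrystallographic (Δ : Set E) : Prop where
  ne_zero : ∀ α ∈ Δ, α ≠ 0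
  cartan_int : ∀ α ∈ Δ, ∀ β ∈ Δ, ∃ n : ℤ, 2 * ⟪α, β⟫ / ⟪α, α⟫ = n
  reflection_mem : ∀ α ∈ Δ, ∀ β ∈ Δ, β - (2 * ⟪α, β⟫ / ⟪α, α⟫) • α ∈ Δ

theorem two_mul_inner_div_lt_two_or {x y : E} (hxy : x ≠ y) :
    2 * ⟪x, y⟫ / ⟪x, x⟫ < 2 ∨ 2 * ⟪y, x⟫ / ⟪y, y⟫ < 2 := by
  by_contra! h
  have le_inner : ∀ {u v : E}, 2 ≤ 2 * ⟪u, v⟫ / ⟪u, u⟫ → ⟪u, u⟫ ≤ ⟪u, v⟫ := by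
    intro u v huv
    have hu : 0 < ⟪u, u⟫ := lt_of_le_of_ne real_inner_self_nonneg fun hu => by
      rw [← hu, div_zero] at huv; norm_num at huv
    rw [le_div_iff₀ hu] at huv
    linarith
  have hx := le_inner h.1
  have hy := le_inner h.2
  have : ⟪x - y, x - y⟫ ≤ 0 := by
    rw [real_inner_sub_sub_self]; linarith [real_inner_comm x y]
  exact hxy (sub_eq_zero.mp (real_inner_self_nonpos.mp this))

namespace IsCrystallographic

variable {Δ : Set E} {α β : E}

theorem inner_self_pos (hΔ : IsCrystallographic Δ) (hα : α ∈ Δ) : 0 < ⟪α, α⟫ :=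
  real_inner_self_pos.mpr (hΔ.ne_zero α hα)

theorem neg_mem (hΔ : IsCrystallographic Δ) (hα : α ∈ Δ) : -α ∈ Δ := by
  have h := hΔ.reflection_mem α hα α hα
  rwa [mul_div_assoc, div_self (hΔ.inner_self_pos hα).ne', mul_one, two_smul, sub_add_cancel_left]
    at h

theorem cartan_eq_one (hΔ : IsCrystallographic Δ) (hα : α ∈ Δ) (hβ : β ∈ Δ)
    (hpos : 0 < ⟪α, β⟫) (hlt : 2 * ⟪α, β⟫ / ⟪α, α⟫ < 2) : 2 * ⟪α, β⟫ / ⟪α, α⟫ = 1 := by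
  obtain ⟨n, hn⟩ := hΔ.cartan_int α hα β hβ
  have : (0 : ℝ) < n := hn ▸ div_pos (by linarith) (hΔ.inner_self_pos hα)
  rw [hn] at hlt ⊢
  norm_cast at *
  omega

theorem sub_mem_of_inner_pos (hΔ : IsCrystallographic Δ) (hα : α ∈ Δ) (hβ : β ∈ Δ)
    (hpos : 0 < ⟪α, β⟫) (hne : α ≠ β) : α - β ∈ Δ := by
  rcases two_mul_inner_div_lt_two_or hne with h | h
  · have := hΔ.neg_mem (hΔ.reflection_mem α hα β hβ)
    rwa [hΔ.cartan_eq_one hα hβ hpos h, one_smul, neg_sub] at this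
  · have := hΔ.reflection_mem β hβ α hα
    rwa [hΔ.cartan_eq_one hβ hα (real_inner_comm α β ▸ hpos) h, one_smul] at this

theorem add_mem_of_inner_neg (hΔ : IsCrystallographic Δ) (hα : α ∈ Δ) (hβ : β ∈ Δ)
    (hneg : ⟪α, β⟫ < 0) (hne : α + β ≠ 0) : α + β ∈ Δ := by
  rw [← sub_neg_eq_add] at hne ⊢
  exact hΔ.sub_mem_of_inner_pos hα (hΔ.neg_mem hβ) (by rw [inner_neg_right]; linarith)
    (sub_ne_zero.mp hne)

end IsCrystallographic

/-- A closed subset of `Δ` containing no two opposite roots, as `Δ⁺` is. -/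
structure IsPositiveSystem (Δ P : Set E) : Prop where
  subset : P ⊆ Δ
  add_ne_zero : ∀ x ∈ P, ∀ y ∈ P, x + y ≠ 0
  add_mem : ∀ x ∈ P, ∀ y ∈ P, x + y ∈ Δ → x + y ∈ P

/-- The set `I_α` of the paper, relative to the positive system `P`. -/
def summands (P : Set E) (α : E) : Set E :=
  {α} ∪ {β | β ∈ P ∧ α - β ∈ P}

namespace IsCrystallographic

variable {Δ P : Set E}

theorem add_mem_or_add_mem (hΔ : IsCrystallographic Δ) (hP : IsPositiveSystem Δ P)
    {μ ν d : E} (hμ : μ ∈ P) (hν : ν ∈ P) (hd : d ∈ P) (hμν : μ + ν ∈ Δ)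
    (hβ : μ + ν + d ∈ Δ) : μ + d ∈ Δ ∨ ν + d ∈ Δ := by
  by_contra! h
  have inner_nonpos : ∀ x ∈ P, ∀ y ∈ P, x + y = μ + ν → x + d ∉ Δ → y + d ∉ Δ →
      ⟪μ + ν, x⟫ ≤ 0 := by
    intro x hx y hy hxy hxd hyd
    by_contra! hpos
    have hdx : 0 ≤ ⟪x, d⟫ := by
      by_contra! hneg
      exact hxd (hΔ.add_mem_of_inner_neg (hP.subset hx) (hP.subset hd) hneg
        (hP.add_ne_zero x hx d hd))
    have hsub : μ + ν + d - x = y + d := by rw [← hxy]; abel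
    refine hyd (hsub ▸ hΔ.sub_mem_of_inner_pos hβ (hP.subset hx) ?_ ?_)
    · rw [inner_add_left]; linarith [real_inner_comm x d]
    · intro heq
      apply hP.add_ne_zero y hy d hd
      rw [← hsub, heq, sub_self]
  have hμ' := inner_nonpos μ hμ ν hν rfl h.1 h.2
  have hν' := inner_nonpos ν hν μ hμ (add_comm ν μ) h.2 h.1
  have := hΔ.inner_self_pos hμν
  rw [inner_add_right] at this
  linarith

theorem summands_sub_subset_span (hΔ : IsCrystallographic Δ) (hP : IsPositiveSystem Δ P)
    {β d : E} (hβ : β ∈ Δ) (hd : d ∈ P) (hβd : β - d ∈ P) :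
    summands P (β - d) ⊆ span ℤ (summands P β) := by
  have hd_mem : d ∈ summands P β := Or.inr ⟨hd, hβd⟩
  rintro μ (rfl | ⟨hμ, hν⟩)
  · exact subset_span (Or.inr ⟨hβd, by rwa [sub_sub_cancel]⟩)
  have hsum : μ + (β - d - μ) = β - d := add_sub_cancel μ (β - d)
  have hβ' : μ + (β - d - μ) + d ∈ Δ := by rwa [hsum, sub_add_cancel]
  rcases hΔ.add_mem_or_add_mem hP hμ hν hd (by rw [hsum]; exact hP.subset hβd) hβ' with hμd | hνd
  · have hμd_mem : μ + d ∈ summands P β :=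
      Or.inr ⟨hP.add_mem μ hμ d hd hμd, by rwa [sub_add_eq_sub_sub_swap]⟩
    simpa using sub_mem (subset_span hμd_mem) (subset_span hd_mem)
  · have hβμ : β - d - μ + d = β - μ := by abel
    exact subset_span (Or.inr ⟨hμ, hβμ ▸ hP.add_mem _ hν d hd (hβμ ▸ hνd)⟩)

end IsCrystallographic

variable {SR : Finset E}

def posRoots (Δ : Set E) (SR : Finset E) : Set E :=
  {β | β ∈ Δ ∧ ∃ k : E → ℤ, β = ∑ a ∈ SR, (k a : ℝ) • a ∧ ∀ a ∈ SR, 0 ≤ k a}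

theorem coeff_eq_of_sum_smul_eq (hli : LinearIndependent ℝ (fun a : SR => (a : E)))
    {c d : E → ℤ} (h : ∑ a ∈ SR, (c a : ℝ) • a = ∑ a ∈ SR, (d a : ℝ) • a) :
    ∀ a ∈ SR, c a = d a := fun a ha => by
  exact_mod_cast (linearIndepOn_finset_iffₛ (v := id) (s := SR)).mp hli
    (fun a => (c a : ℝ)) (fun a => (d a : ℝ)) h a ha

theorem sum_single_smul [DecidableEq E] {δ : E} (hδ : δ ∈ SR) :
    ∑ a ∈ SR, ((Pi.single δ (1 : ℤ) : E → ℤ) a : ℝ) • a = δ := by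
  rw [Finset.sum_eq_single_of_mem δ hδ fun a _ ha => by simp [ha]]
  simp

theorem eq_of_coeff_pos (hli : LinearIndependent ℝ (fun a : SR => (a : E)))
    {β δ : E} {c : E → ℤ} (hβ : β ∈ SR) (hβc : β = ∑ a ∈ SR, (c a : ℝ) • a) (hδ : δ ∈ SR)
    (hcδ : 0 < c δ) : δ = β := by
  classical
  have := coeff_eq_of_sum_smul_eq hli (hβc.symm.trans (sum_single_smul hβ).symm) δ hδ
  by_contra hne
  rw [Pi.single_eq_of_ne hne] at this
  omega

theorem mem_posRoots_of_mem {Δ : Set E} (hSR : ↑SR ⊆ Δ) {δ : E} (hδ : δ ∈ SR) :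
    δ ∈ posRoots Δ SR := by
  classical
  exact ⟨hSR hδ, Pi.single δ 1, (sum_single_smul hδ).symm,
    fun a _ => (Pi.single_nonneg.mpr zero_le_one : (0 : E → ℤ) ≤ Pi.single δ 1) a⟩

theorem isPositiveSystem_posRoots {Δ : Set E} (hne : ∀ α ∈ Δ, α ≠ 0)
    (hli : LinearIndependent ℝ (fun a : SR => (a : E))) :
    IsPositiveSystem Δ (posRoots Δ SR) where
  subset _ hx := hx.1
  add_ne_zero := by
    rintro x ⟨hx, c, rfl, hc⟩ y ⟨-, d, rfl, hd⟩ hxy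
    have hcd : ∑ a ∈ SR, ((c + d) a : ℝ) • a = ∑ a ∈ SR, ((0 : E → ℤ) a : ℝ) • a := by
      simpa [add_smul, Finset.sum_add_distrib] using hxy
    have hc0 : ∀ a ∈ SR, c a = 0 := fun a ha => by
      have := coeff_eq_of_sum_smul_eq hli hcd a ha
      simp only [Pi.add_apply, Pi.zero_apply] at this
      linarith [hc a ha, hd a ha]
    exact hne _ hx (Finset.sum_eq_zero fun a ha => by simp [hc0 a ha])
  add_mem := by
    rintro x ⟨-, c, rfl, hc⟩ y ⟨-, d, rfl, hd⟩ hxy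
    refine ⟨hxy, c + d, by simp [add_smul, Finset.sum_add_distrib], fun a ha => ?_⟩
    exact add_nonneg (hc a ha) (hd a ha)

theorem exists_coeff_pos_inner_pos {β : E} {c : E → ℤ} (hβc : β = ∑ a ∈ SR, (c a : ℝ) • a)
    (hc : ∀ a ∈ SR, 0 ≤ c a) (hβ : β ≠ 0) : ∃ a ∈ SR, 0 < c a ∧ 0 < ⟪β, a⟫ := by
  by_contra! h
  have : ⟪β, β⟫ ≤ 0 := by
    nth_rw 2 [hβc]
    simp only [inner_sum, real_inner_smul_right]
    refine Finset.sum_nonpos fun a ha => ?_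
    rcases (hc a ha).lt_or_eq with hca | hca
    · exact mul_nonpos_of_nonneg_of_nonpos (by exact_mod_cast hca.le) (h a ha hca)
    · simp [← hca]
  exact hβ (real_inner_self_nonpos.mp this)

theorem mem_span_summands_of_coeff_pos {Δ : Set E} (hΔ : IsCrystallographic Δ) (hSR : ↑SR ⊆ Δ)
    (hli : LinearIndependent ℝ (fun a : SR => (a : E))) {β : E} {c : E → ℤ} (hβ : β ∈ Δ)
    (hβc : β = ∑ a ∈ SR, (c a : ℝ) • a) (hc : ∀ a ∈ SR, 0 ≤ c a) {δ : E} (hδ : δ ∈ SR)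
    (hcδ : 0 < c δ) : δ ∈ span ℤ (summands (posRoots Δ SR) β) := by
  classical
  induction hn : (∑ a ∈ SR, c a).toNat using Nat.strong_induction_on generalizing β c with
  | _ n ih =>
  by_cases hβSR : β ∈ SR
  · obtain rfl := eq_of_coeff_pos hli hβSR hβc hδ hcδ
    exact subset_span (Or.inl rfl)
  obtain ⟨δ₀, hδ₀, hcδ₀, hinner⟩ := exists_coeff_pos_inner_pos hβc hc (hΔ.ne_zero β hβ)
  set c' : E → ℤ := c - Pi.single δ₀ 1 with hc'
  have hβc' : β - δ₀ = ∑ a ∈ SR, (c' a : ℝ) • a := by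
    simp only [hc', Pi.sub_apply, Int.cast_sub, sub_smul, Finset.sum_sub_distrib, ← hβc,
      sum_single_smul hδ₀]
  have hc'_nonneg : ∀ a ∈ SR, 0 ≤ c' a := fun a ha => by
    rcases eq_or_ne a δ₀ with rfl | hne
    · simp [hc']; omega
    · simpa [hc', Pi.single_eq_of_ne hne] using hc a ha
  have hβδ₀ : β - δ₀ ∈ posRoots Δ SR :=
    ⟨hΔ.sub_mem_of_inner_pos hβ (hSR hδ₀) hinner (by rintro rfl; exact hβSR hδ₀),
      c', hβc', hc'_nonneg⟩
  have hδ₀P := mem_posRoots_of_mem hSR hδ₀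
  rcases eq_or_ne δ δ₀ with rfl | hδδ₀
  · exact subset_span (Or.inr ⟨hδ₀P, hβδ₀⟩)
  have hheight : ∑ a ∈ SR, c' a = ∑ a ∈ SR, c a - 1 := by
    simp [hc', Finset.sum_sub_distrib, hδ₀]
  have hle : c δ₀ ≤ ∑ a ∈ SR, c a := Finset.single_le_sum hc hδ₀
  refine span_le.mpr (hΔ.summands_sub_subset_span (isPositiveSystem_posRoots hΔ.ne_zero hli)
    hβ hδ₀P hβδ₀) (ih _ ?_ hβδ₀.1 hβc' hc'_nonneg ?_ rfl)
  · omega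
  · simpa [hc', Pi.single_eq_of_ne hδδ₀] using hcδ

end RootSystem

theorem supp_subset_zspan_Ialpha_general
    {E : Type*} [NormedAddCommGroup E] [InnerProductSpace ℝ E]
    (Δ : Finset E)
    (hne : ∀ α ∈ Δ, α ≠ (0 : E))
    (hcrys : ∀ α ∈ Δ, ∀ β ∈ Δ, ∃ n : ℤ, 2 * ⟪α, β⟫ / ⟪α, α⟫ = (n : ℝ))
    (hrefl : ∀ α ∈ Δ, ∀ β ∈ Δ, β - (2 * ⟪α, β⟫ / ⟪α, α⟫) • α ∈ Δ)
    (SR : Finset E) (hSRΔ : SR ⊆ Δ)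
    (hli : LinearIndependent ℝ (fun a : SR => (a : E)))
    (Δpos : Set E)
    (hΔpos : ∀ β, β ∈ Δpos ↔ β ∈ Δ ∧
      ∃ k : E → ℤ, β = ∑ a ∈ SR, (k a : ℝ) • a ∧ ∀ a ∈ SR, 0 ≤ k a)
    (α : E) (hα : α ∈ Δpos)
    (k : E → ℤ) (hk : α = ∑ a ∈ SR, (k a : ℝ) • a)
    (Iα : Set E)
    (hIα : Iα = {α} ∪ {β : E | β ∈ Δpos ∧ α - β ∈ Δpos}) :
    ∀ δ ∈ SR, 0 < k δ → δ ∈ Submodule.span ℤ Iα := by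
  intro δ hδ hkδ
  obtain ⟨hαΔ, k₀, hk₀, hk₀_nonneg⟩ := (hΔpos α).mp hα
  obtain rfl : Δpos = posRoots Δ SR := Set.ext hΔpos
  have hkk₀ := coeff_eq_of_sum_smul_eq hli (hk.symm.trans hk₀) δ hδ
  subst hIα
  exact mem_span_summands_of_coeff_pos ⟨hne, hcrys, hrefl⟩ (Finset.coe_subset.mpr hSRΔ) hli hαΔ
    hk₀ hk₀_nonneg hδ (hkk₀ ▸ hkδ)

/-- Let `Δ` be a finite reduced crystallographic root system in a
finite-dimensional real inner product space `E`, with base (set of simple roots) `SR`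
and positive roots `Δpos`.  For a positive root `α` with coefficients `k` on the base,
set `Iα = {α} ∪ {β ∈ Δ⁺ : α − β ∈ Δ⁺}`.  Then every simple root in `Supp α`
(i.e. every `δ ∈ SR` with `k δ > 0`) lies in the ℤ-span of `Iα`. -/
theorem supp_subset_zspan_Ialpha
    {E : Type*} [NormedAddCommGroup E] [InnerProductSpace ℝ E] [FiniteDimensional ℝ E]
    (Δ : Finset E)
    (hne : ∀ α ∈ Δ, α ≠ (0 : E))
    (hcrys : ∀ α ∈ Δ, ∀ β ∈ Δ, ∃ n : ℤ, 2 * ⟪α, β⟫ / ⟪α, α⟫ = (n : ℝ))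
    (hrefl : ∀ α ∈ Δ, ∀ β ∈ Δ, β - (2 * ⟪α, β⟫ / ⟪α, α⟫) • α ∈ Δ)
    (hred : ∀ α ∈ Δ, ∀ β ∈ Δ, (∃ c : ℝ, β = c • α) → β = α ∨ β = -α)
    (SR : Finset E) (hSRΔ : SR ⊆ Δ)
    (hli : LinearIndependent ℝ (fun a : SR => (a : E)))
    (hbase : ∀ β ∈ Δ, ∃ k : E → ℤ,
      β = ∑ a ∈ SR, (k a : ℝ) • a ∧
        ((∀ a ∈ SR, 0 ≤ k a) ∨ (∀ a ∈ SR, k a ≤ 0)))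
    (Δpos : Set E)
    (hΔpos : ∀ β, β ∈ Δpos ↔ β ∈ Δ ∧
      ∃ k : E → ℤ, β = ∑ a ∈ SR, (k a : ℝ) • a ∧ ∀ a ∈ SR, 0 ≤ k a)
    (α : E) (hα : α ∈ Δpos)
    (k : E → ℤ) (hk : α = ∑ a ∈ SR, (k a : ℝ) • a)
    (Iα : Set E)
    (hIα : Iα = {α} ∪ {β : E | β ∈ Δpos ∧ α - β ∈ Δpos}) :
    ∀ δ ∈ SR, 0 < k δ → δ ∈ Submodule.span ℤ Iα :=
  supp_subset_zspan_Ialpha_general Δ hne hcrys hrefl SR hSRΔ hli Δpos hΔpos α hα k hk Iα hIα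
end

section
/- Let α and β be roots of F, with distinguished elements ϱ_α, ϱ_β ∈ F respectively. If ϱ_β(α) < 0 and ϱ_α(β) < 0, then α + β = 0. -/
/-! If `ϱ` is neither `ϱα` nor `ϱβ`, both `ϱ α` and `ϱ β` are `≤ 0`; moreover
`ϱα (α + β) = 1 + ϱα β ≤ 0` and symmetrically for `ϱβ`. So every element of `F` is `≤ 0` at
`α + β`. Since the nonnegative cone of `F` contains every functional `ψ` and also `-ψ`, all
`ℚ`-valued functionals vanish at `α + β`, which forces `α + β = 0` in the free module `M`. -/

theorem Module.eq_zero_of_forall_linearMap_rat_eq_zero {M : Type*} [AddCommGroup M]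
    [Module.Projective ℤ M] {x : M} (h : ∀ ψ : M →ₗ[ℤ] ℚ, ψ x = 0) : x = 0 := by
  refine (Module.forall_dual_apply_eq_zero_iff ℤ x).mp fun φ ↦ ?_
  simpa using h ((Algebra.linearMap ℤ ℚ) ∘ₗ φ)

theorem linearMap_rat_apply_nonpos_of_forall_mem_nonpos {M : Type*} [AddCommGroup M]
    {F : Finset (M →ₗ[ℤ] ℤ)}
    (hspan : ∀ φ : M →ₗ[ℤ] ℚ, ∃ c : (M →ₗ[ℤ] ℤ) → ℚ,
        (∀ ϱ, 0 ≤ c ϱ) ∧ ∀ x : M, φ x = ∑ ϱ ∈ F, c ϱ * (ϱ x : ℚ))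
    {x : M} (hx : ∀ ϱ ∈ F, ϱ x ≤ 0) (ψ : M →ₗ[ℤ] ℚ) : ψ x ≤ 0 := by
  obtain ⟨c, hc, hψ⟩ := hspan ψ
  rw [hψ]
  refine Finset.sum_nonpos fun ϱ hϱ ↦ mul_nonpos_of_nonneg_of_nonpos (hc ϱ) ?_
  exact_mod_cast hx ϱ hϱ

theorem eq_zero_of_forall_mem_nonpos {M : Type*} [AddCommGroup M] [Module.Projective ℤ M]
    {F : Finset (M →ₗ[ℤ] ℤ)}
    (hspan : ∀ φ : M →ₗ[ℤ] ℚ, ∃ c : (M →ₗ[ℤ] ℤ) → ℚ,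
        (∀ ϱ, 0 ≤ c ϱ) ∧ ∀ x : M, φ x = ∑ ϱ ∈ F, c ϱ * (ϱ x : ℚ))
    {x : M} (hx : ∀ ϱ ∈ F, ϱ x ≤ 0) : x = 0 := by
  refine Module.eq_zero_of_forall_linearMap_rat_eq_zero fun ψ ↦ le_antisymm
    (linearMap_rat_apply_nonpos_of_forall_mem_nonpos hspan hx ψ) ?_
  simpa using linearMap_rat_apply_nonpos_of_forall_mem_nonpos hspan hx (-ψ)

theorem root_add_root_eq_zero_general
    {M : Type*} [AddCommGroup M] [Module.Free ℤ M]
    (F : Finset (M →ₗ[ℤ] ℤ))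
    (hspan : ∀ φ : M →ₗ[ℤ] ℚ, ∃ c : (M →ₗ[ℤ] ℤ) → ℚ,
        (∀ ϱ, 0 ≤ c ϱ) ∧ ∀ x : M, φ x = ∑ ϱ ∈ F, c ϱ * (ϱ x : ℚ))
    (α β : M) (ϱα ϱβ : M →ₗ[ℤ] ℤ)
    (hα1 : ϱα α = 1) (hα2 : ∀ ϱ ∈ F, ϱ ≠ ϱα → ϱ α ≤ 0)
    (hβ1 : ϱβ β = 1) (hβ2 : ∀ ϱ ∈ F, ϱ ≠ ϱβ → ϱ β ≤ 0)
    (h1 : ϱβ α < 0) (h2 : ϱα β < 0) :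
    α + β = 0 := by
  refine eq_zero_of_forall_mem_nonpos hspan fun ϱ hϱ ↦ ?_
  rw [map_add]
  by_cases hα : ϱ = ϱα
  · subst hα; omega
  by_cases hβ : ϱ = ϱβ
  · subst hβ; omega
  linarith [hα2 ϱ hϱ hα, hβ2 ϱ hϱ hβ]

/-- Let `M` be a finitely generated free ℤ-module and `F` a finite set of
ℤ-linear functionals on `M` such that every ℚ-valued functional on `M` is a nonnegative
rational combination of the elements of `F`.  If `α` and `β` are roots of `F` with
distinguished elements `ϱα`, `ϱβ`, and `ϱβ α < 0` and `ϱα β < 0`, then `α + β = 0`. -/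
theorem root_add_root_eq_zero
    {M : Type*} [AddCommGroup M] [Module.Free ℤ M] [Module.Finite ℤ M]
    (F : Finset (M →ₗ[ℤ] ℤ))
    (hspan : ∀ φ : M →ₗ[ℤ] ℚ, ∃ c : (M →ₗ[ℤ] ℤ) → ℚ,
        (∀ ϱ, 0 ≤ c ϱ) ∧ ∀ x : M, φ x = ∑ ϱ ∈ F, c ϱ * (ϱ x : ℚ))
    (α β : M) (ϱα ϱβ : M →ₗ[ℤ] ℤ)
    (hϱα : ϱα ∈ F) (hα1 : ϱα α = 1) (hα2 : ∀ ϱ ∈ F, ϱ ≠ ϱα → ϱ α ≤ 0)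
    (hϱβ : ϱβ ∈ F) (hβ1 : ϱβ β = 1) (hβ2 : ∀ ϱ ∈ F, ϱ ≠ ϱβ → ϱ β ≤ 0)
    (h1 : ϱβ α < 0) (h2 : ϱα β < 0) :
    α + β = 0 :=
  root_add_root_eq_zero_general F hspan α β ϱα ϱβ hα1 hα2 hβ1 hβ2 h1 h2
end

section
/- The set of all roots of F is finite. -/
/-!
A root `α` satisfies `ϱ α ≤ 1` for every `ϱ ∈ F`, and it is these upper bounds alone that force
finiteness: writing `-ψ` as a nonnegative combination `∑ cϱ ϱ` bounds `ψ α` from below by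
`-∑ cϱ`, so `α ↦ (ϱ α)_{ϱ ∈ F}` lands in a finite box of `ℤ^F`. This map is injective because
`F` spans the ℚ-valued functionals, hence separates the points of the projective module `M`.
-/

section

variable {M : Type*} [AddCommGroup M]

lemma eq_zero_of_forall_mem_apply_eq_zero [Module.Projective ℤ M] {F : Finset (M →ₗ[ℤ] ℤ)}
    (hspan : ∀ φ : M →ₗ[ℤ] ℚ, ∃ c : (M →ₗ[ℤ] ℤ) → ℚ, ∀ x, φ x = ∑ ϱ ∈ F, c ϱ * (ϱ x : ℚ))
    {x : M} (hx : ∀ ϱ ∈ F, ϱ x = 0) : x = 0 := by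
  refine (Module.forall_dual_apply_eq_zero_iff ℤ x).mp fun ψ => ?_
  obtain ⟨c, hc⟩ := hspan (Algebra.linearMap ℤ ℚ ∘ₗ ψ)
  have hψ : (ψ x : ℚ) = ∑ ϱ ∈ F, c ϱ * (ϱ x : ℚ) := hc x
  rw [Finset.sum_eq_zero fun ϱ hϱ => by rw [hx ϱ hϱ, Int.cast_zero, mul_zero]] at hψ
  exact_mod_cast hψ

lemma finite_setOf_forall_mem_apply_mem_Icc {F : Finset (M →ₗ[ℤ] ℤ)}
    (hsep : ∀ x : M, (∀ ϱ ∈ F, ϱ x = 0) → x = 0) (a b : (M →ₗ[ℤ] ℤ) → ℤ) :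
    {x : M | ∀ ϱ ∈ F, ϱ x ∈ Set.Icc (a ϱ) (b ϱ)}.Finite := by
  let eval : M →ₗ[ℤ] (F → ℤ) := LinearMap.pi fun ϱ => ϱ.1
  have heval : Function.Injective eval := by
    refine (injective_iff_map_eq_zero eval).mpr fun x hx => hsep x fun ϱ hϱ => ?_
    exact congrFun hx ⟨ϱ, hϱ⟩
  exact ((Set.Finite.pi fun ϱ : F => Set.finite_Icc (a ϱ) (b ϱ)).preimage
    heval.injOn).subset fun x hx ϱ _ => hx ϱ ϱ.2

lemma neg_apply_le_sum_of_forall_mem_apply_le_one {F : Finset (M →ₗ[ℤ] ℤ)} {ψ : M →ₗ[ℤ] ℤ}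
    {c : (M →ₗ[ℤ] ℤ) → ℚ} (hc : ∀ ϱ, 0 ≤ c ϱ) (hψ : ∀ x, -(ψ x : ℚ) = ∑ ϱ ∈ F, c ϱ * (ϱ x : ℚ))
    {α : M} (hα : ∀ ϱ ∈ F, ϱ α ≤ 1) : -(ψ α : ℚ) ≤ ∑ ϱ ∈ F, c ϱ := by
  rw [hψ]
  refine Finset.sum_le_sum fun ϱ hϱ => mul_le_of_le_one_right (hc ϱ) ?_
  exact_mod_cast hα ϱ hϱ

lemma finite_setOf_forall_mem_apply_le_one [Module.Projective ℤ M] {F : Finset (M →ₗ[ℤ] ℤ)}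
    (hspan : ∀ φ : M →ₗ[ℤ] ℚ, ∃ c : (M →ₗ[ℤ] ℤ) → ℚ,
        (∀ ϱ, 0 ≤ c ϱ) ∧ ∀ x : M, φ x = ∑ ϱ ∈ F, c ϱ * (ϱ x : ℚ)) :
    {α : M | ∀ ϱ ∈ F, ϱ α ≤ 1}.Finite := by
  have hsep (x : M) : (∀ ϱ ∈ F, ϱ x = 0) → x = 0 :=
    eq_zero_of_forall_mem_apply_eq_zero fun φ => (hspan φ).imp fun _ h => h.2
  have hneg (ψ : M →ₗ[ℤ] ℤ) : ∃ c : (M →ₗ[ℤ] ℤ) → ℚ,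
      (∀ ϱ, 0 ≤ c ϱ) ∧ ∀ x, -(ψ x : ℚ) = ∑ ϱ ∈ F, c ϱ * (ϱ x : ℚ) := by
    obtain ⟨c, hc, hψ⟩ := hspan (-(Algebra.linearMap ℤ ℚ ∘ₗ ψ))
    exact ⟨c, hc, fun x => by simpa using hψ x⟩
  choose c hc hψ using hneg
  refine (finite_setOf_forall_mem_apply_mem_Icc hsep (fun ψ => ⌈-∑ ϱ ∈ F, c ψ ϱ⌉)
    fun _ => 1).subset fun α hα ψ hψF => ⟨?_, hα ψ hψF⟩
  rw [Int.ceil_le]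
  linarith [neg_apply_le_sum_of_forall_mem_apply_le_one (hc ψ) (hψ ψ) hα]

end

theorem roots_finite_general
    {M : Type*} [AddCommGroup M] [Module.Free ℤ M]
    (F : Finset (M →ₗ[ℤ] ℤ))
    (hspan : ∀ φ : M →ₗ[ℤ] ℚ, ∃ c : (M →ₗ[ℤ] ℤ) → ℚ,
        (∀ ϱ, 0 ≤ c ϱ) ∧ ∀ x : M, φ x = ∑ ϱ ∈ F, c ϱ * (ϱ x : ℚ)) :
    {α : M | ∃ ϱα ∈ F, ϱα α = 1 ∧ ∀ ϱ ∈ F, ϱ ≠ ϱα → ϱ α ≤ 0}.Finite := by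
  refine (finite_setOf_forall_mem_apply_le_one hspan).subset ?_
  rintro α ⟨ϱα, -, hϱα, hle⟩ ϱ hϱ
  by_cases h : ϱ = ϱα
  · exact h ▸ hϱα.le
  · exact (hle ϱ hϱ h).trans zero_le_one

/-- Let `M` be a finitely generated free ℤ-module and `F` a finite set of
ℤ-linear functionals on `M` such that every ℚ-valued functional on `M` is a nonnegative
rational combination of the elements of `F`.  Then the set of all roots of `F`
(elements `α ∈ M` admitting `ϱα ∈ F` with `ϱα α = 1` and `ϱ α ≤ 0` for every other
`ϱ ∈ F`) is finite. -/
theorem roots_finite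
    {M : Type*} [AddCommGroup M] [Module.Free ℤ M] [Module.Finite ℤ M]
    (F : Finset (M →ₗ[ℤ] ℤ))
    (hspan : ∀ φ : M →ₗ[ℤ] ℚ, ∃ c : (M →ₗ[ℤ] ℤ) → ℚ,
        (∀ ϱ, 0 ≤ c ϱ) ∧ ∀ x : M, φ x = ∑ ϱ ∈ F, c ϱ * (ϱ x : ℚ)) :
    {α : M | ∃ ϱα ∈ F, ϱα α = 1 ∧ ∀ ϱ ∈ F, ϱ ≠ ϱα → ϱ α ≤ 0}.Finite :=
  roots_finite_general F hspan
end

section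
/- Let α and β be roots of F, with distinguished elements ϱ_α, ϱ_β ∈ F respectively, and suppose α + β ≠ 0. If ϱ_α(β) < 0, then ϱ_β(α) = 0. (For an Enriques B⁻-system (𝔛, 𝓕, ρ), applied with F = 𝓕¹ and α, β two distinct simple roots lying in 𝔛 with ρ(α), ρ(β) ≠ 0, this yields: if ⟨ρ(α), β⟩ < 0 then ⟨ρ(β), α⟩ = 0.) -/
theorem eq_zero_of_forall_ratFunctional_apply_nonpos {M : Type*} [AddCommGroup M]
    [Module.Free ℤ M] {x : M} (hx : ∀ φ : M →ₗ[ℤ] ℚ, φ x ≤ 0) : x = 0 := by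
  refine (Module.forall_dual_apply_eq_zero_iff ℤ x).1 fun ψ => ?_
  let φ : M →ₗ[ℤ] ℚ := Algebra.linearMap ℤ ℚ ∘ₗ ψ
  have hφ : φ x = 0 := le_antisymm (hx φ) (by simpa using hx (-φ))
  simpa [φ] using hφ

theorem apply_nonpos_of_forall_mem_apply_nonpos {M : Type*} [AddCommGroup M]
    {F : Finset (M →ₗ[ℤ] ℤ)}
    (hspan : ∀ φ : M →ₗ[ℤ] ℚ, ∃ c : (M →ₗ[ℤ] ℤ) → ℚ,
        (∀ ϱ, 0 ≤ c ϱ) ∧ ∀ x : M, φ x = ∑ ϱ ∈ F, c ϱ * (ϱ x : ℚ))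
    {x : M} (hx : ∀ ϱ ∈ F, ϱ x ≤ 0) (φ : M →ₗ[ℤ] ℚ) : φ x ≤ 0 := by
  obtain ⟨c, hc, hφ⟩ := hspan φ
  rw [hφ]
  exact Finset.sum_nonpos fun ϱ hϱ =>
    mul_nonpos_of_nonneg_of_nonpos (hc ϱ) (by exact_mod_cast hx ϱ hϱ)

theorem root_pair_orthogonality_general
    {M : Type*} [AddCommGroup M] [Module.Free ℤ M]
    (F : Finset (M →ₗ[ℤ] ℤ))
    (hspan : ∀ φ : M →ₗ[ℤ] ℚ, ∃ c : (M →ₗ[ℤ] ℤ) → ℚ,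
        (∀ ϱ, 0 ≤ c ϱ) ∧ ∀ x : M, φ x = ∑ ϱ ∈ F, c ϱ * (ϱ x : ℚ))
    (α β : M) (ϱα ϱβ : M →ₗ[ℤ] ℤ)
    (hα1 : ϱα α = 1) (hα2 : ∀ ϱ ∈ F, ϱ ≠ ϱα → ϱ α ≤ 0)
    (hϱβ : ϱβ ∈ F) (hβ1 : ϱβ β = 1) (hβ2 : ∀ ϱ ∈ F, ϱ ≠ ϱβ → ϱ β ≤ 0)
    (hab : α + β ≠ 0) (h : ϱα β < 0) :
    ϱβ α = 0 := by
  have hne : ϱβ ≠ ϱα := fun e => by rw [e] at hβ1; omega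
  refine le_antisymm (hα2 ϱβ hϱβ hne) (not_lt.1 fun hlt => hab ?_)
  -- If also `ϱβ α < 0`, every `ϱ ∈ F` is nonpositive on `α + β`; since `F` generates all
  -- functionals as a cone, this forces `α + β = 0`.
  refine eq_zero_of_forall_ratFunctional_apply_nonpos
    (apply_nonpos_of_forall_mem_apply_nonpos hspan fun ϱ hϱ => ?_)
  rw [map_add]
  by_cases hA : ϱ = ϱα
  · subst hA; omega
  by_cases hB : ϱ = ϱβ
  · subst hB; omega
  linarith [hα2 ϱ hϱ hA, hβ2 ϱ hϱ hB]

/-- Let `M` be a finitely generated free ℤ-module and `F` a finite set of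
ℤ-linear functionals on `M` such that every ℚ-valued functional on `M` is a nonnegative
rational combination of the elements of `F`.  If `α` and `β` are roots of `F` with
distinguished elements `ϱα`, `ϱβ`, `α + β ≠ 0`, and `ϱα β < 0`, then `ϱβ α = 0`. -/
theorem root_pair_orthogonality
    {M : Type*} [AddCommGroup M] [Module.Free ℤ M] [Module.Finite ℤ M]
    (F : Finset (M →ₗ[ℤ] ℤ))
    (hspan : ∀ φ : M →ₗ[ℤ] ℚ, ∃ c : (M →ₗ[ℤ] ℤ) → ℚ,
        (∀ ϱ, 0 ≤ c ϱ) ∧ ∀ x : M, φ x = ∑ ϱ ∈ F, c ϱ * (ϱ x : ℚ))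
    (α β : M) (ϱα ϱβ : M →ₗ[ℤ] ℤ)
    (hϱα : ϱα ∈ F) (hα1 : ϱα α = 1) (hα2 : ∀ ϱ ∈ F, ϱ ≠ ϱα → ϱ α ≤ 0)
    (hϱβ : ϱβ ∈ F) (hβ1 : ϱβ β = 1) (hβ2 : ∀ ϱ ∈ F, ϱ ≠ ϱβ → ϱ β ≤ 0)
    (hab : α + β ≠ 0) (h : ϱα β < 0) :
    ϱβ α = 0 :=
  root_pair_orthogonality_general F hspan α β ϱα ϱβ hα1 hα2 hϱβ hβ1 hβ2 hab h
end

section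
/- Let m be root-like with distinguished index i and let n be root-like with distinguished index j, where i ≠ j, m(j) = 0, and n(i) = −p with p ≥ 0 an integer. If p > 0, then m + n is root-like with distinguished index j and y_m ∘ y_n − y_n ∘ y_m = p · y_{m+n}; if p = 0, then y_m ∘ y_n = y_n ∘ y_m (the derivations commute). -/
open MvPolynomial

/-- For a "root-like" integer vector `m` with distinguished index `i`
(`m i = 1` and `m ϱ ≤ 0` for `ϱ ≠ i`), the unique ℂ-linear derivation `y_m` of
`MvPolynomial ι ℂ` with `y_m (X i) = ∏_{ϱ ≠ i} X ϱ ^ (−m ϱ)` and `y_m (X ϱ) = 0`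
for `ϱ ≠ i`. -/
noncomputable def yDer {ι : Type*} [Fintype ι] [DecidableEq ι] (m : ι → ℤ) (i : ι) :
    Derivation ℂ (MvPolynomial ι ℂ) (MvPolynomial ι ℂ) :=
  MvPolynomial.mkDerivation ℂ (fun ϱ =>
    if ϱ = i then ∏ ϱ' ∈ Finset.univ.erase i, (X ϱ' : MvPolynomial ι ℂ) ^ (-(m ϱ')).toNat
    else 0)

/-!
Write `y_m = x^{m⁻} ∂ᵢ`, where `x^{m⁻} = ∏ X ϱ ^ (-m ϱ)₊` (the factor at `i` is `1` since
`m i = 1`). Partial derivatives commute, so for derivations of this shape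
`⁅a ∂ᵢ, b ∂ⱼ⁆ = a ∂ᵢ(b) ∂ⱼ - b ∂ⱼ(a) ∂ᵢ`. Here `∂ⱼ(x^{m⁻}) = 0` because `m j = 0`, and
`x^{m⁻} ∂ᵢ(x^{n⁻}) = p x^{(m+n)⁻}` because `X i` occurs in `x^{n⁻}` with exponent `p`.
-/

theorem Derivation.smul_lie_smul {R A : Type*} [CommRing R] [CommRing A] [Algebra R A]
    (a b : A) (D E : Derivation R A A) :
    ⁅a • D, b • E⁆ = (a * D b) • E - (b * E a) • D + (a * b) • ⁅D, E⁆ := by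
  ext f
  simp only [Derivation.commutator_apply, Derivation.add_apply, Derivation.sub_apply,
    Derivation.smul_apply, smul_eq_mul, Derivation.leibniz]
  ring

theorem MvPolynomial.lie_pderiv_pderiv {σ R : Type*} [CommRing R] (i j : σ) :
    ⁅(pderiv i : Derivation R (MvPolynomial σ R) (MvPolynomial σ R)),
      (pderiv j : Derivation R (MvPolynomial σ R) (MvPolynomial σ R))⁆ = 0 := by
  classical
  refine derivation_ext fun k => ?_
  simp only [Derivation.commutator_apply, pderiv_X, Derivation.zero_apply]
  rw [Pi.single_apply, Pi.single_apply]
  split_ifs <;> simp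

section RootLike

variable {ι : Type*}

def IsRootLike (m : ι → ℤ) (i : ι) : Prop :=
  m i = 1 ∧ ∀ ϱ, ϱ ≠ i → m ϱ ≤ 0

noncomputable def negExponent [Finite ι] (m : ι → ℤ) : ι →₀ ℕ :=
  Finsupp.equivFunOnFinite.symm fun ϱ => (-m ϱ).toNat

@[simp]
theorem negExponent_apply [Finite ι] (m : ι → ℤ) (ϱ : ι) : negExponent m ϱ = (-m ϱ).toNat := rfl

theorem yDer_eq_smul_pderiv [Fintype ι] [DecidableEq ι] (m : ι → ℤ) (i : ι) (hmi : 0 ≤ m i) :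
    yDer m i = monomial (negExponent m) (1 : ℂ) • pderiv i := by
  refine derivation_ext fun ϱ => ?_
  have hprod : ∏ ϱ' ∈ Finset.univ.erase i, (X ϱ' : MvPolynomial ι ℂ) ^ (-(m ϱ')).toNat
      = monomial (negExponent m) 1 := by
    rw [Finset.prod_erase _ (by simp [Int.toNat_eq_zero.mpr (neg_nonpos.mpr hmi)]),
      monomial_eq, Finsupp.prod_fintype _ _ (fun _ => pow_zero _), C_1, one_mul]
    rfl
  simp only [yDer, mkDerivation_X, Derivation.smul_apply, pderiv_X, Pi.single_apply, smul_eq_mul,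
    mul_ite, mul_one, mul_zero, hprod]

theorem negExponent_add [Finite ι] {m n : ι → ℤ} {i j : ι} (hij : i ≠ j) (hm : IsRootLike m i)
    (hn : ∀ ϱ, ϱ ≠ j → n ϱ ≤ 0) (hmj : m j = 0) :
    negExponent m + (negExponent n - Finsupp.single i 1) = negExponent (m + n) := by
  classical
  ext ϱ
  simp only [Finsupp.add_apply, Finsupp.tsub_apply, Finsupp.single_apply, negExponent_apply,
    Pi.add_apply]
  rcases eq_or_ne i ϱ with rfl | hiϱ
  · have := hn i hij
    rw [if_pos rfl, hm.1]
    omega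
  rw [if_neg hiϱ]
  rcases eq_or_ne ϱ j with rfl | hϱj
  · rw [hmj]
    omega
  have := hm.2 ϱ hiϱ.symm
  have := hn ϱ hϱj
  omega

theorem IsRootLike.add {m n : ι → ℤ} {i j : ι} (hm : IsRootLike m i) (hn : IsRootLike n j)
    (hmj : m j = 0) (hni : n i < 0) : IsRootLike (m + n) j := by
  refine ⟨by simp [hmj, hn.1], fun ϱ hϱ => ?_⟩
  by_cases hϱi : ϱ = i
  · subst hϱi
    simp only [Pi.add_apply, hm.1]
    omega
  · simpa using add_nonpos (hm.2 ϱ hϱi) (hn.2 ϱ hϱ)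

theorem lie_yDer_yDer [Fintype ι] [DecidableEq ι] {m n : ι → ℤ} {i j : ι} (hij : i ≠ j)
    (hm : IsRootLike m i) (hn : IsRootLike n j) (hmj : m j = 0) {p : ℤ} (hp : 0 ≤ p)
    (hni : n i = -p) :
    ⁅yDer m i, yDer n j⁆ = p • yDer (m + n) j := by
  rw [yDer_eq_smul_pderiv m i (by simp [hm.1]), yDer_eq_smul_pderiv n j (by simp [hn.1]),
    yDer_eq_smul_pderiv (m + n) j (by simp [hmj, hn.1]), Derivation.smul_lie_smul,
    MvPolynomial.lie_pderiv_pderiv, smul_zero, add_zero, ← smul_assoc]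
  have hpderiv_j : pderiv j (monomial (negExponent m) (1 : ℂ)) = 0 := by
    simp [hmj]
  have hpderiv_i : monomial (negExponent m) (1 : ℂ) * pderiv i (monomial (negExponent n) 1)
      = p • monomial (negExponent (m + n)) 1 := by
    rw [pderiv_monomial, monomial_mul, negExponent_add hij hm hn.2 hmj, smul_monomial]
    have hcoeff : ((p.toNat : ℕ) : ℂ) = p := by exact_mod_cast Int.toNat_of_nonneg hp
    simp [hni, hcoeff]
  rw [hpderiv_j, mul_zero, zero_smul, sub_zero, hpderiv_i]

end RootLike

/-- Let `m` be root-like with distinguished index `i` and `n` root-like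
with distinguished index `j`, where `i ≠ j`, `m j = 0`, and `n i = −p` with `p ≥ 0`.
If `p > 0`, then `m + n` is root-like with distinguished index `j` and
`y_m ∘ y_n − y_n ∘ y_m = p • y_{m+n}`; if `p = 0`, the derivations `y_m` and `y_n`
commute. -/
theorem yDer_commutator
    {ι : Type*} [Fintype ι] [DecidableEq ι]
    (m n : ι → ℤ) (i j : ι) (hij : i ≠ j)
    (hmi : m i = 1) (hm : ∀ ϱ, ϱ ≠ i → m ϱ ≤ 0)
    (hnj : n j = 1) (hn : ∀ ϱ, ϱ ≠ j → n ϱ ≤ 0)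
    (hmj : m j = 0) (p : ℤ) (hp : 0 ≤ p) (hni : n i = -p) :
    (0 < p →
      ((m + n) j = 1 ∧ ∀ ϱ, ϱ ≠ j → (m + n) ϱ ≤ 0) ∧
      ∀ f : MvPolynomial ι ℂ,
        yDer m i (yDer n j f) - yDer n j (yDer m i f) = p • yDer (m + n) j f) ∧
    (p = 0 → ∀ f : MvPolynomial ι ℂ,
        yDer m i (yDer n j f) = yDer n j (yDer m i f)) := by
  have hlie := lie_yDer_yDer hij ⟨hmi, hm⟩ ⟨hnj, hn⟩ hmj hp hni
  have hcomm (f : MvPolynomial ι ℂ) :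
      yDer m i (yDer n j f) - yDer n j (yDer m i f) = p • yDer (m + n) j f := by
    rw [← Derivation.commutator_apply, hlie, Derivation.smul_apply]
  refine ⟨fun hp0 => ⟨IsRootLike.add ⟨hmi, hm⟩ ⟨hnj, hn⟩ hmj (by omega), hcomm⟩, ?_⟩
  rintro rfl f
  simpa [sub_eq_zero] using hcomm f
end

section
/- Let m be root-like with distinguished index i and let n be root-like with distinguished index j, where i ≠ j, m(j) = 0, and n(i) = −p with p ≥ 0 an integer. Writing ad(y_m)(d) = y_m ∘ d − d ∘ y_m for a derivation d of R, one has ad(y_m)^q(y_n) ≠ 0 for every integer q with 0 ≤ q ≤ p, and ad(y_m)^q(y_n) = 0 for every integer q ≥ p + 1. -/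
/-!
Write `y_m = x^a ∂_i` and `y_n = x^b ∂_j` for monomials `x^a`, `x^b`. Since `m j = 0`, the
coefficient `x^a` is free of `x_j`, so `y_m` commutes with `∂_j` and
`ad(y_m)(f ∂_j) = y_m(f) ∂_j`; hence `ad(y_m)^q(y_n) = y_m^q(x^b) ∂_j`. As `x^a` is free of `x_i`
as well, `y_m^q(x^b)` is a monomial whose coefficient is the falling factorial
`b_i (b_i - 1) ⋯ (b_i - q + 1)`, and `b_i = p` because `i ≠ j`.
-/

open MvPolynomial

theorem Derivation.commutator_smul_right {R A : Type*} [CommRing R] [CommRing A] [Algebra R A]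
    (D E : Derivation R A A) (a : A) : ⁅D, a • E⁆ = D a • E + a • ⁅D, E⁆ := by
  ext b
  simp only [Derivation.commutator_apply, Derivation.smul_apply, Derivation.add_apply,
    smul_eq_mul, Derivation.leibniz]
  ring

namespace MvPolynomial

variable {σ R : Type*} [CommRing R]

theorem smul_pderiv_eq_zero_iff (f : MvPolynomial σ R) (j : σ) :
    f • pderiv (R := R) j = 0 ↔ f = 0 := by
  refine ⟨fun h => ?_, fun h => by rw [h, zero_smul]⟩
  simpa using congr($h (X j))

theorem lie_pderiv_pderiv_s5 (i j : σ) : ⁅pderiv (R := R) i, pderiv (R := R) j⁆ = 0 := by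
  classical
  refine derivation_ext fun k => ?_
  have hconst : ∀ a b : σ, pderiv a (pderiv b (X k : MvPolynomial σ R)) = 0 := by
    intro a b
    rw [pderiv_X, Pi.single_apply]
    split_ifs <;> simp
  rw [Derivation.commutator_apply, hconst, hconst, sub_self, Derivation.zero_apply]

theorem lie_smul_pderiv_pderiv {g : MvPolynomial σ R} {i j : σ} (hg : pderiv (R := R) j g = 0) :
    ⁅g • pderiv (R := R) i, pderiv (R := R) j⁆ = 0 := by
  rw [← lie_skew, Derivation.commutator_smul_right, hg, lie_pderiv_pderiv_s5, zero_smul, smul_zero,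
    add_zero, neg_zero]

theorem iterate_lie_smul_pderiv {D : Derivation R (MvPolynomial σ R) (MvPolynomial σ R)} {j : σ}
    (hD : ⁅D, pderiv (R := R) j⁆ = 0) (f : MvPolynomial σ R) (q : ℕ) :
    (fun E => ⁅D, E⁆)^[q] (f • pderiv (R := R) j) = (⇑D)^[q] f • pderiv j := by
  induction q with
  | zero => rfl
  | succ q ih =>
    rw [Function.iterate_succ_apply', ih, Derivation.commutator_smul_right, hD, smul_zero, add_zero,
      Function.iterate_succ_apply']

theorem pderiv_monomial_of_eq_zero {t : σ →₀ ℕ} {j : σ} (ht : t j = 0) (c : R) :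
    pderiv (R := R) j (monomial t c) = 0 := by
  rw [pderiv_monomial, ht, Nat.cast_zero, mul_zero, monomial_zero]

theorem iterate_monomial_smul_pderiv_monomial {t : σ →₀ ℕ} {i : σ} (ht : t i = 0)
    (s : σ →₀ ℕ) (a : R) (q : ℕ) :
    (⇑(monomial t (1 : R) • pderiv (R := R) i))^[q] (monomial s a) =
      monomial (q • t + (s - Finsupp.single i q)) (a * (s i).descFactorial q) := by
  induction q with
  | zero => simp
  | succ q ih =>
    have hi : (q • t + (s - Finsupp.single i q)) i = s i - q := by simp [ht]
    have hexp : t + (q • t + (s - Finsupp.single i q) - Finsupp.single i 1) =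
        (q + 1) • t + (s - Finsupp.single i (q + 1)) := by
      ext k
      rcases eq_or_ne k i with rfl | hk
      · simp only [Finsupp.add_apply, Finsupp.tsub_apply, hi, Finsupp.smul_apply, ht,
          Finsupp.single_eq_same, smul_zero, zero_add]
        omega
      · simp [Finsupp.single_eq_of_ne hk, add_smul]
        ring
    rw [Function.iterate_succ_apply', ih, Derivation.smul_apply, pderiv_monomial, smul_eq_mul,
      monomial_mul, hexp, hi, Nat.descFactorial_succ, Nat.cast_mul]
    congr 1
    ring

end MvPolynomial

section

variable {ι : Type*} [Fintype ι] [DecidableEq ι]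

noncomputable def yDerExponent (m : ι → ℤ) (i : ι) : ι →₀ ℕ :=
  Finsupp.indicator (Finset.univ.erase i) fun ϱ _ => (-m ϱ).toNat

theorem yDerExponent_apply (m : ι → ℤ) (i ϱ : ι) :
    yDerExponent m i ϱ = if ϱ = i then 0 else (-m ϱ).toNat := by
  by_cases h : ϱ = i <;> simp [yDerExponent, Finsupp.indicator_apply, h]

theorem yDer_eq_monomial_smul_pderiv (m : ι → ℤ) (i : ι) :
    yDer m i = monomial (yDerExponent m i) (1 : ℂ) • pderiv i := by
  refine derivation_ext fun ϱ => ?_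
  rw [yDer, mkDerivation_X, Derivation.smul_apply, pderiv_X]
  by_cases h : ϱ = i
  · subst h; simp [prod_X_pow, yDerExponent]
  · simp [h]

end

theorem ad_yDer_pow_general
    {ι : Type*} [Fintype ι] [DecidableEq ι]
    (m n : ι → ℤ) (i j : ι) (hij : i ≠ j)
    (hmj : m j = 0) (p : ℤ) (hp : 0 ≤ p) (hni : n i = -p)
    (ad : Derivation ℂ (MvPolynomial ι ℂ) (MvPolynomial ι ℂ) →
          Derivation ℂ (MvPolynomial ι ℂ) (MvPolynomial ι ℂ))
    (had : ∀ d f, ad d f = yDer m i (d f) - d (yDer m i f)) :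
    (∀ q : ℕ, (q : ℤ) ≤ p → ad^[q] (yDer n j) ≠ 0) ∧
    (∀ q : ℕ, p + 1 ≤ (q : ℤ) → ad^[q] (yDer n j) = 0) := by
  have ad_eq : ad = fun d => ⁅yDer m i, d⁆ := funext fun d => Derivation.ext (had d)
  have hcomm : ⁅yDer m i, pderiv (R := ℂ) j⁆ = 0 := by
    rw [yDer_eq_monomial_smul_pderiv]
    exact lie_smul_pderiv_pderiv (pderiv_monomial_of_eq_zero (by simp [yDerExponent_apply, hmj]) _)
  have hexp : yDerExponent n j i = p.toNat := by simp [yDerExponent_apply, hij, hni]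
  have hzero : ∀ q : ℕ, ad^[q] (yDer n j) = 0 ↔ p.toNat < q := by
    intro q
    rw [ad_eq, yDer_eq_monomial_smul_pderiv n j, iterate_lie_smul_pderiv hcomm,
      yDer_eq_monomial_smul_pderiv m i,
      iterate_monomial_smul_pderiv_monomial (by simp [yDerExponent_apply]), hexp,
      smul_pderiv_eq_zero_iff, monomial_eq_zero, one_mul, Nat.cast_eq_zero,
      Nat.descFactorial_eq_zero_iff_lt]
  exact ⟨fun q hq => by rw [Ne, hzero]; omega, fun q hq => by rw [hzero]; omega⟩

/-- Let `m` be root-like with distinguished index `i` and `n` root-like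
with distinguished index `j`, where `i ≠ j`, `m j = 0`, and `n i = −p` with `p ≥ 0`.
Writing `ad d' = y_m ∘ d' − d' ∘ y_m`, one has `ad^[q] y_n ≠ 0` for `0 ≤ q ≤ p` and
`ad^[q] y_n = 0` for `q ≥ p + 1`. -/
theorem ad_yDer_pow
    {ι : Type*} [Fintype ι] [DecidableEq ι]
    (m n : ι → ℤ) (i j : ι) (hij : i ≠ j)
    (hmi : m i = 1) (hm : ∀ ϱ, ϱ ≠ i → m ϱ ≤ 0)
    (hnj : n j = 1) (hn : ∀ ϱ, ϱ ≠ j → n ϱ ≤ 0)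
    (hmj : m j = 0) (p : ℤ) (hp : 0 ≤ p) (hni : n i = -p)
    (ad : Derivation ℂ (MvPolynomial ι ℂ) (MvPolynomial ι ℂ) →
          Derivation ℂ (MvPolynomial ι ℂ) (MvPolynomial ι ℂ))
    (had : ∀ d f, ad d f = yDer m i (d f) - d (yDer m i f)) :
    (∀ q : ℕ, (q : ℤ) ≤ p → ad^[q] (yDer n j) ≠ 0) ∧
    (∀ q : ℕ, p + 1 ≤ (q : ℤ) → ad^[q] (yDer n j) = 0) :=
  ad_yDer_pow_general m n i j hij hmj p hp hni ad had
end

section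
/- Let η be an admissible map, let Π' ⊆ Π_η be a subset on which ρ_η is injective, and let α, β ∈ Π' be distinct. Then: (a) η(α, β) ≤ 0; (b) if (α, β) = 0 then η(α, β) = η(β, α) = 0. -/
open scoped RealInnerProductSpace

/-- Let `η` be an admissible map on a set `P` of simple roots, let
`P' ⊆ P_η` be a subset on which `ρ_η` is injective, and let `α, β ∈ P'` be distinct.
Then (a) `η α β ≤ 0`, and (b) if `(α, β) = 0` then `η α β = η β α = 0`. -/
theorem admissible_map_on_injective_subset
    {E : Type*} [NormedAddCommGroup E] [InnerProductSpace ℝ E]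
    (P : Finset E)
    (h0 : ∀ α ∈ P, α ≠ (0 : E))
    (hli : LinearIndependent ℝ (fun a : P => (a : E)))
    (hobtuse : ∀ α ∈ P, ∀ β ∈ P, α ≠ β → ⟪α, β⟫ ≤ 0)
    (hcart : ∀ α ∈ P, ∀ β ∈ P, α ≠ β → ∃ n : ℤ, 2 * ⟪α, β⟫ / ⟪α, α⟫ = (n : ℝ))
    (η : E → E → ℤ)
    (hval : ∀ α ∈ P, ∀ β ∈ P, η α β ∈ ({-3, -2, -1, 0, 1} : Set ℤ))
    (am1 : ∀ α ∈ P, η α α = 0 ∨ η α α = 1)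
    (am2 : ∀ α ∈ P, η α α = 0 → ∀ β ∈ P, η α β = 0 ∧ η β α = 0)
    (am3 : ∀ α ∈ P, ∀ β ∈ P, η α β = 1 → ∀ γ ∈ P, η α γ = η β γ)
    (am4 : ∀ α ∈ P, ∀ β ∈ P, η α β < 0 → η β α = 0)
    (am5 : ∀ α ∈ P, ∀ β ∈ P, α ≠ β → 2 * ⟪α, β⟫ / ⟪α, α⟫ ≤ (η α β : ℝ))
    (P' : Finset E)
    (hP' : ∀ α ∈ P', α ∈ P ∧ η α α = 1)
    (hinj : ∀ α ∈ P', ∀ β ∈ P',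
      (∀ γ ∈ P, η γ γ = 1 → η α γ = η β γ) → α = β)
    (α β : E) (hα : α ∈ P') (hβ : β ∈ P') (hne : α ≠ β) :
    η α β ≤ 0 ∧ (⟪α, β⟫ = 0 → η α β = 0 ∧ η β α = 0) := by
  obtain ⟨hαP, hαη⟩ := hP' α hα
  obtain ⟨hβP, hβη⟩ := hP' β hβ
  have key : ∀ a ∈ P', ∀ b ∈ P', a ≠ b → η a b ≤ 0 := by
    intro a ha b hb hab
    obtain ⟨haP, _⟩ := hP' a ha
    obtain ⟨hbP, _⟩ := hP' b hb
    by_contra h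
    push_neg at h
    have h1 : η a b = 1 := by
      have := hval a haP b hbP
      simp only [Set.mem_insert_iff, Set.mem_singleton_iff] at this
      omega
    exact hab (hinj a ha b hb (fun γ hγ _ => am3 a haP b hbP h1 γ hγ))
  refine ⟨key α hα β hβ hne, fun horth => ?_⟩
  have h5 := am5 α hαP β hβP hne
  rw [horth] at h5
  simp at h5
  have hαβ : η α β = 0 := le_antisymm (key α hα β hβ hne) (by exact_mod_cast h5)
  have h5' := am5 β hβP α hαP hne.symm
  rw [real_inner_comm, horth] at h5'
  simp at h5'
  have hβα : η β α = 0 := le_antisymm (key β hβ α hα hne.symm) (by exact_mod_cast h5')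
  exact ⟨hαβ, hβα⟩
end

section
/- Let η be an admissible map. Then for every nonempty subset Π' ⊆ Π_η there exists a root β ∈ Π' such that η(β, γ) ≥ 0 for all γ ∈ Π'. -/
open scoped RealInnerProductSpace

/-!
Suppose no root of `Π'` works. Then every `β ∈ Π'` has a successor `f β ∈ Π'` with
`η(β, f β) < 0`. By (AM5) and integrality both Cartan integers of the pair `β, f β` are `≤ -1`,
so the unit vectors `e_β = β / ‖β‖` satisfy `(e_β, e_{f β}) ≤ -1/2`; by (AM4) `f` has no
2-cycles, so the ordered pairs `(β, f β)` and `(f β, β)` are `2 |Π'|` distinct. Expanding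
`‖∑ e_β‖²` gives at most `|Π'| + 2 |Π'| · (-1/2) = 0`, so `∑ e_β = 0`, against linear
independence.
-/

namespace Finset

variable {α M : Type*} [DecidableEq α] [AddCommMonoid M] [Preorder M] [AddLeftMono M]

theorem sum_offDiag_le_sum_edges {s : Finset α} {f : α → α} (hf : ∀ i ∈ s, f i ∈ s)
    (hfix : ∀ i ∈ s, f i ≠ i) (hcyc : ∀ i ∈ s, f (f i) ≠ i) {F : α × α → M}
    (hF : ∀ p ∈ s.offDiag, F p ≤ 0) :
    ∑ p ∈ s.offDiag, F p ≤ ∑ i ∈ s, (F (i, f i) + F (f i, i)) := by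
  have hdisj : Disjoint (s.image fun i => (i, f i)) (s.image fun i => (f i, i)) := by
    simp only [disjoint_left, mem_image, not_exists, not_and]
    rintro _ ⟨i, -, rfl⟩ j hj hji
    obtain ⟨rfl, hffj⟩ := Prod.mk.inj hji
    exact hcyc j hj hffj.symm
  have hsub : (s.image fun i => (i, f i)) ∪ (s.image fun i => (f i, i)) ⊆ s.offDiag := by
    refine union_subset ?_ ?_ <;> rintro _ hp <;> obtain ⟨i, hi, rfl⟩ := mem_image.1 hp
    exacts [mem_offDiag.2 ⟨hi, hf i hi, (hfix i hi).symm⟩, mem_offDiag.2 ⟨hf i hi, hi, hfix i hi⟩]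
  calc ∑ p ∈ s.offDiag, F p
      ≤ ∑ p ∈ (s.image fun i => (i, f i)) ∪ (s.image fun i => (f i, i)), F p :=
        sum_le_sum_of_subset_of_nonpos' hsub fun p hp _ => hF p hp
    _ = ∑ i ∈ s, (F (i, f i) + F (f i, i)) := by
        rw [sum_union hdisj, sum_image (by simp), sum_image (by simp), sum_add_distrib]

end Finset

section InnerProductSpace

variable {E : Type*} [NormedAddCommGroup E] [InnerProductSpace ℝ E]

theorem real_inner_sum_self {ι : Type*} [DecidableEq ι] (s : Finset ι) (u : ι → E) :
    ⟪∑ i ∈ s, u i, ∑ i ∈ s, u i⟫ = ∑ i ∈ s, ⟪u i, u i⟫ + ∑ p ∈ s.offDiag, ⟪u p.1, u p.2⟫ := by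
  simp_rw [sum_inner, inner_sum]
  rw [← Finset.sum_product' (f := fun i j => ⟪u i, u j⟫), ← Finset.diag_union_offDiag,
    Finset.sum_union (Finset.disjoint_diag_offDiag s), Finset.diag, Finset.sum_map]
  rfl

theorem sum_eq_zero_of_inner_apply_le_neg_half {ι : Type*} [DecidableEq ι] {s : Finset ι}
    {u : ι → E} (hu : ∀ i ∈ s, ‖u i‖ = 1) (hobtuse : ∀ i ∈ s, ∀ j ∈ s, i ≠ j → ⟪u i, u j⟫ ≤ 0)
    {f : ι → ι} (hf : ∀ i ∈ s, f i ∈ s) (hfix : ∀ i ∈ s, f i ≠ i) (hcyc : ∀ i ∈ s, f (f i) ≠ i)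
    (hacute : ∀ i ∈ s, ⟪u i, u (f i)⟫ ≤ -1 / 2) :
    ∑ i ∈ s, u i = 0 := by
  rw [← inner_self_eq_zero (𝕜 := ℝ)]
  refine le_antisymm ?_ real_inner_self_nonneg
  calc ⟪∑ i ∈ s, u i, ∑ i ∈ s, u i⟫
      = ∑ i ∈ s, ⟪u i, u i⟫ + ∑ p ∈ s.offDiag, ⟪u p.1, u p.2⟫ := real_inner_sum_self s u
    _ ≤ ∑ i ∈ s, ⟪u i, u i⟫ + ∑ i ∈ s, (⟪u i, u (f i)⟫ + ⟪u (f i), u i⟫) := by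
        gcongr
        exact Finset.sum_offDiag_le_sum_edges (F := fun p => ⟪u p.1, u p.2⟫) hf hfix hcyc
          fun p hp => by
            obtain ⟨hp₁, hp₂, hne⟩ := Finset.mem_offDiag.1 hp
            exact hobtuse p.1 hp₁ p.2 hp₂ hne
    _ ≤ ∑ i ∈ s, (1 + (-1 / 2 + -1 / 2)) := by
        rw [← Finset.sum_add_distrib]
        refine Finset.sum_le_sum fun i hi => ?_
        rw [real_inner_self_eq_norm_sq, hu i hi, real_inner_comm (u i)]
        linarith [hacute i hi]
    _ = 0 := by norm_num

theorem real_inner_inv_norm_smul (x y : E) :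
    ⟪‖x‖⁻¹ • x, ‖y‖⁻¹ • y⟫ = ⟪x, y⟫ / (‖x‖ * ‖y‖) := by
  rw [real_inner_smul_left, real_inner_smul_right, div_eq_inv_mul, mul_inv]
  ring

theorem real_inner_le_neg_half_mul_norm_mul_norm {x y : E} (hx : x ≠ 0) (hy : y ≠ 0)
    (hxy : 2 * ⟪x, y⟫ / ⟪x, x⟫ ≤ -1) (hyx : ∃ n : ℤ, 2 * ⟪y, x⟫ / ⟪y, y⟫ = n) :
    ⟪x, y⟫ ≤ -(‖x‖ * ‖y‖) / 2 := by
  -- both Cartan integers are `≤ -1`: `2 ⟪x, y⟫ ≤ -‖x‖²` and `2 ⟪x, y⟫ ≤ -‖y‖²`; multiply them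
  obtain ⟨n, hn⟩ := hyx
  rw [real_inner_self_eq_norm_sq] at hxy hn
  have hx₀ : 0 < ‖x‖ := norm_pos_iff.2 hx
  have hy₀ : 0 < ‖y‖ := norm_pos_iff.2 hy
  rw [real_inner_comm, div_eq_iff (by positivity)] at hn
  rw [div_le_iff₀ (by positivity)] at hxy
  have hn₁ : n ≤ -1 := by
    by_contra! h
    have : (0 : ℝ) ≤ n := by exact_mod_cast (show 0 ≤ n by omega)
    nlinarith
  have hn₁' : (n : ℝ) ≤ -1 := by exact_mod_cast hn₁
  nlinarith [sq_nonneg (‖x‖ - ‖y‖)]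

theorem sum_inv_norm_smul_eq_zero {S : Finset E} (h0 : ∀ x ∈ S, x ≠ 0)
    (hobtuse : ∀ x ∈ S, ∀ y ∈ S, x ≠ y → ⟪x, y⟫ ≤ 0) {f : E → E} (hf : ∀ x ∈ S, f x ∈ S)
    (hfix : ∀ x ∈ S, f x ≠ x) (hcyc : ∀ x ∈ S, f (f x) ≠ x)
    (hacute : ∀ x ∈ S, ⟪x, f x⟫ ≤ -(‖x‖ * ‖f x‖) / 2) :
    ∑ x ∈ S, ‖x‖⁻¹ • x = 0 := by
  classical
  refine sum_eq_zero_of_inner_apply_le_neg_half (fun x hx => norm_smul_inv_norm (h0 x hx))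
    (fun x hx y hy hxy => ?_) hf hfix hcyc fun x hx => ?_
  · rw [real_inner_inv_norm_smul]
    exact div_nonpos_of_nonpos_of_nonneg (hobtuse x hx y hy hxy) (by positivity)
  · have hpos : 0 < ‖x‖ * ‖f x‖ := by
      have := h0 x hx; have := h0 (f x) (hf x hx); positivity
    rw [real_inner_inv_norm_smul, div_le_iff₀ hpos]
    linarith [hacute x hx]

end InnerProductSpace

theorem admissible_map_exists_nonnegative_root_general
    {E : Type*} [NormedAddCommGroup E] [InnerProductSpace ℝ E]
    (P : Finset E)
    (h0 : ∀ α ∈ P, α ≠ (0 : E))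
    (hli : LinearIndependent ℝ (fun a : P => (a : E)))
    (hobtuse : ∀ α ∈ P, ∀ β ∈ P, α ≠ β → ⟪α, β⟫ ≤ 0)
    (hcart : ∀ α ∈ P, ∀ β ∈ P, α ≠ β → ∃ n : ℤ, 2 * ⟪α, β⟫ / ⟪α, α⟫ = (n : ℝ))
    (η : E → E → ℤ)
    (am4 : ∀ α ∈ P, ∀ β ∈ P, η α β < 0 → η β α = 0)
    (am5 : ∀ α ∈ P, ∀ β ∈ P, α ≠ β → 2 * ⟪α, β⟫ / ⟪α, α⟫ ≤ (η α β : ℝ))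
    (P' : Finset E)
    (hP' : ∀ α ∈ P', α ∈ P ∧ η α α = 1)
    (hne : P'.Nonempty) :
    ∃ β ∈ P', ∀ γ ∈ P', 0 ≤ η β γ := by
  by_contra! hneg
  choose! f hf hηf using hneg
  have hP : ∀ β ∈ P', β ∈ P := fun β hβ => (hP' β hβ).1
  have hfix : ∀ β ∈ P', f β ≠ β := fun β hβ hfβ => by
    have := hηf β hβ
    rw [hfβ, (hP' β hβ).2] at this
    omega
  have hcyc : ∀ β ∈ P', f (f β) ≠ β := fun β hβ hffβ => by
    have := hηf (f β) (hf β hβ)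
    rw [hffβ, am4 β (hP β hβ) (f β) (hP _ (hf β hβ)) (hηf β hβ)] at this
    omega
  have hacute : ∀ β ∈ P', ⟪β, f β⟫ ≤ -(‖β‖ * ‖f β‖) / 2 := fun β hβ =>
    real_inner_le_neg_half_mul_norm_mul_norm (h0 β (hP β hβ)) (h0 _ (hP _ (hf β hβ)))
      ((am5 β (hP β hβ) (f β) (hP _ (hf β hβ)) (hfix β hβ).symm).trans
        (by exact_mod_cast Int.le_sub_one_of_lt (hηf β hβ)))
      (hcart _ (hP _ (hf β hβ)) β (hP β hβ) (hfix β hβ))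
  have hsum := sum_inv_norm_smul_eq_zero (fun β hβ => h0 β (hP β hβ))
    (fun β hβ γ hγ => hobtuse β (hP β hβ) γ (hP γ hγ)) hf hfix hcyc hacute
  obtain ⟨β, hβ⟩ := hne
  have hcoeff := (linearIndepOn_iff' (v := id) (s := (P : Set E))).1 hli P' (fun x => ‖x‖⁻¹)
    (fun x hx => hP x hx) hsum β hβ
  exact norm_ne_zero_iff.2 (h0 β (hP β hβ)) (inv_eq_zero.1 hcoeff)

/-- Let `η` be an admissible map on a set `P` of simple roots.  Then every
nonempty subset `P' ⊆ P_η = {α ∈ P : η α α = 1}` contains a root `β` with `η β γ ≥ 0`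
for all `γ ∈ P'`. -/
theorem admissible_map_exists_nonnegative_root
    {E : Type*} [NormedAddCommGroup E] [InnerProductSpace ℝ E]
    (P : Finset E)
    (h0 : ∀ α ∈ P, α ≠ (0 : E))
    (hli : LinearIndependent ℝ (fun a : P => (a : E)))
    (hobtuse : ∀ α ∈ P, ∀ β ∈ P, α ≠ β → ⟪α, β⟫ ≤ 0)
    (hcart : ∀ α ∈ P, ∀ β ∈ P, α ≠ β → ∃ n : ℤ, 2 * ⟪α, β⟫ / ⟪α, α⟫ = (n : ℝ))
    (η : E → E → ℤ)
    (hval : ∀ α ∈ P, ∀ β ∈ P, η α β ∈ ({-3, -2, -1, 0, 1} : Set ℤ))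
    (am1 : ∀ α ∈ P, η α α = 0 ∨ η α α = 1)
    (am2 : ∀ α ∈ P, η α α = 0 → ∀ β ∈ P, η α β = 0 ∧ η β α = 0)
    (am3 : ∀ α ∈ P, ∀ β ∈ P, η α β = 1 → ∀ γ ∈ P, η α γ = η β γ)
    (am4 : ∀ α ∈ P, ∀ β ∈ P, η α β < 0 → η β α = 0)
    (am5 : ∀ α ∈ P, ∀ β ∈ P, α ≠ β → 2 * ⟪α, β⟫ / ⟪α, α⟫ ≤ (η α β : ℝ))
    (P' : Finset E)
    (hP' : ∀ α ∈ P', α ∈ P ∧ η α α = 1)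
    (hne : P'.Nonempty) :
    ∃ β ∈ P', ∀ γ ∈ P', 0 ≤ η β γ :=
  admissible_map_exists_nonnegative_root_general P h0 hli hobtuse hcart η am4 am5 P' hP' hne
end

section
/- Let η be an admissible map. Then ℚ^{Π_η} = ∪_{Π' ∈ Π̃_η} C_{Π'}; that is, for every x ∈ ℚ^{Π_η} there exists a subset Π' ⊆ Π_η on which ρ_η is injective such that x is a nonnegative rational linear combination of elements of S(Π'). (This is the completeness of the fan 𝓕_η associated with η.) -/
open scoped RealInnerProductSpace Classical

/-! Write `γ → β` when `η γ β < 0`. By (AM5) and integrality of `⟨β∨, γ⟩`, the two roots of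
an edge make an angle of at least `2π/3`, and by (AM4) no edge is reversed. If a nonempty
`Q ⊆ Π_η` had no sink, the periodic points of a successor map would be linearly independent,
pairwise non-acute vectors each having two distinct neighbours at angle `≥ 2π/3`; the sum of
their normalisations would then have nonpositive square norm. So `Q` has a sink `γ₀`, and by
(AM3) every `γ` with `η γ₀ γ = 1` has the row of `γ₀`, which is `1` on this class `C` and `0` on
`Q \ C`. Induct on `Q`: dominate `x` on `Q \ C` by a nonnegative combination of rows, exact on
the chosen roots, and then add the root of `C` where `x` exceeds that combination most, if it
does at all. The excess of the combination over `x` on the other roots gives the coefficients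
of the `-ĕ_α`. -/

theorem Function.nonempty_periodicPts {α : Type*} [Finite α] [Nonempty α] (f : α → α) :
    (Function.periodicPts f).Nonempty := by
  obtain ⟨m, n, hne, heq⟩ := Finite.exists_ne_map_eq_of_infinite (f^[·] (Classical.arbitrary α))
  wlog hlt : m < n generalizing m n
  · exact this n m hne.symm heq.symm (by lia)
  refine ⟨f^[m] (Classical.arbitrary α), Function.mk_mem_periodicPts (Nat.sub_pos_of_lt hlt) ?_⟩
  rw [Function.IsPeriodicPt, Function.IsFixedPt, ← Function.iterate_add_apply,
    Nat.sub_add_cancel hlt.le]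
  exact heq.symm

section Geometry

variable {E : Type*} [NormedAddCommGroup E] [InnerProductSpace ℝ E]

theorem sum_eq_zero_of_forall_two_obtuse_neighbours {ι : Type*} [Fintype ι] (u : ι → E)
    (hunit : ∀ i, ⟪u i, u i⟫ = 1) (hobtuse : Pairwise fun i j => ⟪u i, u j⟫ ≤ 0)
    (hnbr : ∀ i, ∃ j k, j ≠ k ∧ ⟪u i, u j⟫ ≤ -(1 / 2) ∧ ⟪u i, u k⟫ ≤ -(1 / 2)) :
    ∑ i, u i = 0 := by
  refine real_inner_self_nonpos.mp ?_
  rw [sum_inner]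
  refine Finset.sum_nonpos fun i _ => ?_
  rw [inner_sum]
  obtain ⟨j, k, hjk, hj, hk⟩ := hnbr i
  have hij : i ≠ j := by rintro rfl; linarith [hunit i]
  have hik : i ≠ k := by rintro rfl; linarith [hunit i]
  have hrest : ∑ l ∈ Finset.univ \ {i, j, k}, ⟪u i, u l⟫ ≤ 0 :=
    Finset.sum_nonpos fun l hl => hobtuse fun hil => by simp [← hil] at hl
  rw [← Finset.sum_sdiff (Finset.subset_univ {i, j, k}),
    Finset.sum_insert (by simp [hij, hik]), Finset.sum_pair hjk]
  linarith [hunit i]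

theorem not_linearIndependent_of_forall_two_obtuse_neighbours {ι : Type*} [Fintype ι]
    [Nonempty ι] (v : ι → E) (hobtuse : Pairwise fun i j => ⟪v i, v j⟫ ≤ 0)
    (hnbr : ∀ i, ∃ j k, j ≠ k ∧ 2 * ⟪v i, v j⟫ ≤ -(‖v i‖ * ‖v j‖) ∧
      2 * ⟪v i, v k⟫ ≤ -(‖v i‖ * ‖v k‖)) :
    ¬LinearIndependent ℝ v := by
  intro hli
  have hpos : ∀ i, 0 < ‖v i‖ := fun i => norm_pos_iff.mpr (hli.ne_zero i)
  have hinner : ∀ i j, ⟪‖v i‖⁻¹ • v i, ‖v j‖⁻¹ • v j⟫ = ⟪v i, v j⟫ / (‖v i‖ * ‖v j‖) := by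
    intro i j
    rw [real_inner_smul_left, real_inner_smul_right]
    field_simp
  have hsum : ∑ i, ‖v i‖⁻¹ • v i = 0 := by
    refine sum_eq_zero_of_forall_two_obtuse_neighbours _ (fun i => ?_) (fun i j hij => ?_)
      (fun i => ?_)
    · rw [hinner, real_inner_self_eq_norm_sq]
      field_simp [(hpos i).ne']
    · simp only [hinner]
      exact div_nonpos_of_nonpos_of_nonneg (hobtuse hij) (by positivity)
    · obtain ⟨j, k, hjk, hj, hk⟩ := hnbr i
      refine ⟨j, k, hjk, ?_, ?_⟩ <;>
      · rw [hinner, div_le_iff₀ (mul_pos (hpos i) (hpos _))]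
        linarith
  have i := Classical.arbitrary ι
  exact (inv_pos.mpr (hpos i)).ne' (Fintype.linearIndependent_iff.mp hli _ hsum i)

theorem exists_forall_not_rel_of_two_inner_le {ι : Type*} [Finite ι] [Nonempty ι] (v : ι → E)
    (hli : LinearIndependent ℝ v) (hobtuse : Pairwise fun i j => ⟪v i, v j⟫ ≤ 0)
    (r : ι → ι → Prop) (hr : ∀ i j, r i j → 2 * ⟪v i, v j⟫ ≤ -(‖v i‖ * ‖v j‖))
    (hasymm : ∀ i j, r i j → ¬r j i) :
    ∃ i, ∀ j, ¬r i j := by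
  by_contra! h
  choose f hf using h
  have := Fintype.ofFinite ι
  have : Nonempty (Function.periodicPts f) := (Function.nonempty_periodicPts f).to_subtype
  refine not_linearIndependent_of_forall_two_obtuse_neighbours
    (fun z : Function.periodicPts f => v z)
    (fun z w hzw => hobtuse (Subtype.val_injective.ne hzw)) (fun z => ?_)
    (hli.comp _ Subtype.val_injective)
  -- `f` permutes its periodic points: the neighbours of `z` are `f z` and a preimage `p`.
  obtain ⟨p, hp, hpz⟩ := (Function.bijOn_periodicPts f).surjOn z.2
  refine ⟨⟨f z, (Function.bijOn_periodicPts f).mapsTo z.2⟩, ⟨p, hp⟩, fun hfz => ?_,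
    hr _ _ (hf z), ?_⟩
  · have hfz : f z = p := congrArg Subtype.val hfz
    exact hasymm _ _ (hf z) (by simpa [hfz, hpz] using hf p)
  · rw [real_inner_comm, mul_comm ‖v z‖]
    simpa [hpz] using hr _ _ (hf p)

theorem two_inner_le_neg_norm_mul_norm {α β : E} (hαβ : 2 * ⟪α, β⟫ / ⟪α, α⟫ ≤ -1)
    (hβα : ∃ n : ℤ, 2 * ⟪β, α⟫ / ⟪β, β⟫ = n) :
    2 * ⟪α, β⟫ ≤ -(‖α‖ * ‖β‖) := by
  have hα : 0 < ‖α‖ := norm_pos_iff.mpr (by rintro rfl; norm_num at hαβ)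
  have hβ : 0 < ‖β‖ := norm_pos_iff.mpr (by rintro rfl; norm_num at hαβ)
  obtain ⟨n, hn⟩ := hβα
  rw [real_inner_self_eq_norm_sq, div_le_iff₀ (by positivity)] at hαβ
  rw [real_inner_self_eq_norm_sq, real_inner_comm] at hn
  have hn_neg : (n : ℝ) < 0 := hn ▸ div_neg_of_neg_of_pos (by nlinarith) (by positivity)
  have hn_le : (n : ℝ) ≤ -1 := by
    have : n < 0 := by exact_mod_cast hn_neg
    exact_mod_cast (show n ≤ -1 by lia)
  have hβα := (div_le_iff₀ (by positivity)).mp (hn.trans_le hn_le)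
  nlinarith [sq_nonneg (‖α‖ - ‖β‖)]

end Geometry

theorem exists_forall_nonneg_of_admissible {E : Type*} [NormedAddCommGroup E]
    [InnerProductSpace ℝ E] {P : Finset E} (hli : LinearIndependent ℝ (fun a : P => (a : E)))
    (hobtuse : ∀ α ∈ P, ∀ β ∈ P, α ≠ β → ⟪α, β⟫ ≤ 0)
    (hcart : ∀ α ∈ P, ∀ β ∈ P, α ≠ β → ∃ n : ℤ, 2 * ⟪α, β⟫ / ⟪α, α⟫ = (n : ℝ))
    {η : E → E → ℤ} (am4 : ∀ α ∈ P, ∀ β ∈ P, η α β < 0 → η β α = 0)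
    (am5 : ∀ α ∈ P, ∀ β ∈ P, α ≠ β → 2 * ⟪α, β⟫ / ⟪α, α⟫ ≤ (η α β : ℝ))
    {Q : Finset E} (hQ : Q ⊆ P) (hdiag : ∀ γ ∈ Q, 0 ≤ η γ γ) (hne : Q.Nonempty) :
    ∃ γ ∈ Q, ∀ β ∈ Q, 0 ≤ η γ β := by
  have hedge : ∀ γ ∈ Q, ∀ β ∈ Q, η γ β < 0 → 2 * ⟪γ, β⟫ ≤ -(‖γ‖ * ‖β‖) := by
    intro γ hγ β hβ hγβ
    have hne : γ ≠ β := by rintro rfl; linarith [hdiag γ hγ]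
    refine two_inner_le_neg_norm_mul_norm ?_ (hcart _ (hQ hβ) _ (hQ hγ) hne.symm)
    exact (am5 _ (hQ hγ) _ (hQ hβ) hne).trans (by exact_mod_cast Int.le_sub_one_of_lt hγβ)
  have : Nonempty Q := hne.to_subtype
  obtain ⟨γ, hγ⟩ := exists_forall_not_rel_of_two_inner_le (fun γ : Q => (γ : E))
    (hli.comp (fun γ : Q => ⟨γ, hQ γ.2⟩) fun _ _ h => Subtype.ext (Subtype.mk.inj h))
    (fun γ β hγβ => hobtuse _ (hQ γ.2) _ (hQ β.2) (Subtype.val_injective.ne hγβ))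
    (fun γ β => η γ β < 0) (fun γ β => hedge γ γ.2 β β.2)
    (fun γ β hγβ => (am4 _ (hQ γ.2) _ (hQ β.2) hγβ).not_lt)
  exact ⟨γ, γ.2, fun β hβ => not_lt.mp (hγ ⟨β, hβ⟩)⟩

section Fan

variable {α : Type*} (η : α → α → ℤ)

def rowComb (S : Finset α) (a : α → ℚ) (γ : α) : ℚ :=
  ∑ β ∈ S, a β * η β γ

/-- `x ≤ ∑ a β ρ_η(β)` on `Q`, with equality on `S`. -/
structure IsConeRepr (Q : Finset α) (x : α → ℚ) (S : Finset α) (a : α → ℚ) : Prop where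
  subset : S ⊆ Q
  ne_one : ∀ β ∈ S, ∀ γ ∈ S, β ≠ γ → η β γ ≠ 1
  nonneg : ∀ β, 0 ≤ a β
  eq_of_mem : ∀ γ ∈ S, x γ = rowComb η S a γ
  le_of_mem : ∀ γ ∈ Q, x γ ≤ rowComb η S a γ

variable {η}

theorem isConeRepr_empty (x : α → ℚ) : IsConeRepr η ∅ x ∅ 0 :=
  ⟨subset_rfl, by simp, fun _ => le_rfl, by simp, by simp⟩

theorem rowComb_insert_update {S : Finset α} {β : α} (hβ : β ∉ S) (a : α → ℚ) (t : ℚ)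
    (γ : α) : rowComb η (insert β S) (Function.update a β t) γ = t * η β γ + rowComb η S a γ := by
  rw [rowComb, Finset.sum_insert hβ, Function.update_self]
  congr 1
  exact Finset.sum_congr rfl fun δ hδ => by rw [Function.update_of_ne (ne_of_mem_of_not_mem hδ hβ)]

theorem IsConeRepr.insert_union {R C S : Finset α} {x a : α → ℚ} (hR : IsConeRepr η R x S a)
    (hdisj : Disjoint R C) (hCC : ∀ γ ∈ C, ∀ δ ∈ C, η γ δ = 1)
    (hCR : ∀ γ ∈ C, ∀ β ∈ R, η γ β = 0) (hRC : ∀ β ∈ R, ∀ γ ∈ C, η β γ ≠ 1) {γ : α}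
    (hγC : γ ∈ C) (hmax : ∀ δ ∈ C, x δ - rowComb η S a δ ≤ x γ - rowComb η S a γ)
    (ht : 0 ≤ x γ - rowComb η S a γ) :
    IsConeRepr η (R ∪ C) x (insert γ S) (Function.update a γ (x γ - rowComb η S a γ)) := by
  have hγS : γ ∉ S := fun h => Finset.disjoint_left.mp hdisj (hR.subset h) hγC
  have hcomb := rowComb_insert_update (η := η) hγS a (x γ - rowComb η S a γ)
  refine ⟨?_, ?_, ?_, ?_, ?_⟩
  · exact Finset.insert_subset (Finset.mem_union_right _ hγC)
      (hR.subset.trans Finset.subset_union_left)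
  · simp only [Finset.mem_insert]
    rintro β (rfl | hβ) δ (rfl | hδ) hβδ
    · exact absurd rfl hβδ
    · simp [hCR β hγC δ (hR.subset hδ)]
    · exact hRC β (hR.subset hβ) δ hγC
    · exact hR.ne_one β hβ δ hδ hβδ
  · intro β
    rcases eq_or_ne β γ with rfl | hβ
    · simpa using ht
    · simpa [hβ] using hR.nonneg β
  · simp only [Finset.mem_insert]
    rintro δ (rfl | hδ)
    · rw [hcomb, hCC δ hγC δ hγC]
      push_cast
      ring
    · rw [hcomb, hCR γ hγC δ (hR.subset hδ), hR.eq_of_mem δ hδ]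
      simp
  · intro δ hδ
    rw [hcomb]
    rcases Finset.mem_union.mp hδ with hδ | hδ
    · rw [hCR γ hγC δ hδ]
      simpa using hR.le_of_mem δ hδ
    · rw [hCC γ hγC δ hδ]
      push_cast
      linarith [hmax δ hδ]

theorem IsConeRepr.exists_union {R C S : Finset α} {x a : α → ℚ} (hR : IsConeRepr η R x S a)
    (hdisj : Disjoint R C) (hC : C.Nonempty) (hCC : ∀ γ ∈ C, ∀ δ ∈ C, η γ δ = 1)
    (hCR : ∀ γ ∈ C, ∀ β ∈ R, η γ β = 0) (hRC : ∀ β ∈ R, ∀ γ ∈ C, η β γ ≠ 1) :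
    ∃ S' a', IsConeRepr η (R ∪ C) x S' a' := by
  obtain ⟨γ, hγC, hmax⟩ := C.exists_max_image (fun δ => x δ - rowComb η S a δ) hC
  by_cases ht : 0 ≤ x γ - rowComb η S a γ
  · exact ⟨_, _, hR.insert_union hdisj hCC hCR hRC hγC hmax ht⟩
  refine ⟨S, a, hR.subset.trans Finset.subset_union_left, hR.ne_one, hR.nonneg, hR.eq_of_mem,
    fun δ hδ => ?_⟩
  rcases Finset.mem_union.mp hδ with hδ | hδ
  · exact hR.le_of_mem δ hδ
  · linarith [hmax δ hδ]

theorem IsConeRepr.eq_rowComb_sub {Q S : Finset α} {x a : α → ℚ} (h : IsConeRepr η Q x S a)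
    {γ : α} (hγ : γ ∈ Q) :
    x γ = rowComb η S a γ +
      ∑ β ∈ Q \ S, max (rowComb η S a β - x β) 0 * (if γ = β then -1 else 0) := by
  simp only [mul_ite, mul_neg, mul_one, mul_zero, Finset.sum_ite_eq, Finset.mem_sdiff]
  by_cases hγS : γ ∈ S
  · simp [hγS, h.eq_of_mem γ hγS]
  · simp [hγS, hγ, max_eq_left (sub_nonneg.mpr (h.le_of_mem γ hγ))]

end Fan

theorem exists_isConeRepr_of_admissible {E : Type*} [NormedAddCommGroup E]
    [InnerProductSpace ℝ E] {P : Finset E} (hli : LinearIndependent ℝ (fun a : P => (a : E)))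
    (hobtuse : ∀ α ∈ P, ∀ β ∈ P, α ≠ β → ⟪α, β⟫ ≤ 0)
    (hcart : ∀ α ∈ P, ∀ β ∈ P, α ≠ β → ∃ n : ℤ, 2 * ⟪α, β⟫ / ⟪α, α⟫ = (n : ℝ))
    {η : E → E → ℤ} (hval : ∀ α ∈ P, ∀ β ∈ P, η α β ∈ ({-3, -2, -1, 0, 1} : Set ℤ))
    (am3 : ∀ α ∈ P, ∀ β ∈ P, η α β = 1 → ∀ γ ∈ P, η α γ = η β γ)
    (am4 : ∀ α ∈ P, ∀ β ∈ P, η α β < 0 → η β α = 0)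
    (am5 : ∀ α ∈ P, ∀ β ∈ P, α ≠ β → 2 * ⟪α, β⟫ / ⟪α, α⟫ ≤ (η α β : ℝ))
    {Q : Finset E} (hQ : Q ⊆ P) (hdiag : ∀ γ ∈ Q, η γ γ = 1) (x : E → ℚ) :
    ∃ S a, IsConeRepr η Q x S a := by
  induction Q using Finset.strongInduction with
  | H Q ih =>
  rcases Q.eq_empty_or_nonempty with rfl | hne
  · exact ⟨∅, 0, isConeRepr_empty x⟩
  obtain ⟨γ₀, hγ₀, hsink⟩ := exists_forall_nonneg_of_admissible hli hobtuse hcart am4 am5 hQ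
    (fun γ hγ => (hdiag γ hγ).ge.trans' zero_le_one) hne
  set C := Q.filter (η γ₀ · = 1)
  have hγ₀C : γ₀ ∈ C := Finset.mem_filter.mpr ⟨hγ₀, hdiag γ₀ hγ₀⟩
  have hrow : ∀ γ ∈ C, ∀ δ ∈ P, η γ δ = η γ₀ δ := fun γ hγ δ hδ =>
    (am3 _ (hQ hγ₀) _ (hQ (Finset.mem_filter.mp hγ).1) (Finset.mem_filter.mp hγ).2 δ hδ).symm
  have hRQ : Q \ C ⊆ Q := Finset.sdiff_subset
  obtain ⟨S, a, hR⟩ := ih (Q \ C) (Finset.sdiff_ssubset (Finset.filter_subset _ _) ⟨γ₀, hγ₀C⟩)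
    (hRQ.trans hQ) (fun γ hγ => hdiag γ (hRQ hγ))
  have hCC : ∀ γ ∈ C, ∀ δ ∈ C, η γ δ = 1 := fun γ hγ δ hδ => by
    rw [hrow γ hγ δ (hQ (Finset.mem_filter.mp hδ).1)]
    exact (Finset.mem_filter.mp hδ).2
  have hCR : ∀ γ ∈ C, ∀ β ∈ Q \ C, η γ β = 0 := by
    intro γ hγ β hβ
    have hβQ : β ∈ Q := hRQ hβ
    have hβC : η γ₀ β ≠ 1 := fun h => (Finset.mem_sdiff.mp hβ).2 (Finset.mem_filter.mpr ⟨hβQ, h⟩)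
    have hval' := hval _ (hQ hγ₀) _ (hQ hβQ)
    simp only [Set.mem_insert_iff, Set.mem_singleton_iff] at hval'
    rw [hrow γ hγ β (hQ hβQ)]
    have := hsink β hβQ
    lia
  have hRC : ∀ β ∈ Q \ C, ∀ γ ∈ C, η β γ ≠ 1 := fun β hβ γ hγ hβγ => by
    have := am3 _ (hQ (hRQ hβ)) _ (hQ (Finset.mem_filter.mp hγ).1) hβγ β (hQ (hRQ hβ))
    rw [hdiag β (hRQ hβ), hCR γ hγ β hβ] at this
    exact one_ne_zero this
  rw [← Finset.sdiff_union_of_subset (Finset.filter_subset (η γ₀ · = 1) Q)]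
  exact hR.exists_union Finset.sdiff_disjoint ⟨γ₀, hγ₀C⟩ hCC hCR hRC

theorem admissible_map_fan_complete_general
    {E : Type*} [NormedAddCommGroup E] [InnerProductSpace ℝ E]
    (P : Finset E)
    (hli : LinearIndependent ℝ (fun a : P => (a : E)))
    (hobtuse : ∀ α ∈ P, ∀ β ∈ P, α ≠ β → ⟪α, β⟫ ≤ 0)
    (hcart : ∀ α ∈ P, ∀ β ∈ P, α ≠ β → ∃ n : ℤ, 2 * ⟪α, β⟫ / ⟪α, α⟫ = (n : ℝ))
    (η : E → E → ℤ)
    (hval : ∀ α ∈ P, ∀ β ∈ P, η α β ∈ ({-3, -2, -1, 0, 1} : Set ℤ))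
    (am3 : ∀ α ∈ P, ∀ β ∈ P, η α β = 1 → ∀ γ ∈ P, η α γ = η β γ)
    (am4 : ∀ α ∈ P, ∀ β ∈ P, η α β < 0 → η β α = 0)
    (am5 : ∀ α ∈ P, ∀ β ∈ P, α ≠ β → 2 * ⟪α, β⟫ / ⟪α, α⟫ ≤ (η α β : ℝ))
    (Pη : Finset E) (hPη : ∀ α, α ∈ Pη ↔ α ∈ P ∧ η α α = 1) :
    ∀ x : {y // y ∈ Pη} → ℚ,
      ∃ P' : Finset E, P' ⊆ Pη ∧
        (∀ α ∈ P', ∀ β ∈ P', (∀ γ ∈ Pη, η α γ = η β γ) → α = β) ∧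
        ∃ a c : E → ℚ, (∀ α, 0 ≤ a α) ∧ (∀ α, 0 ≤ c α) ∧
          ∀ γ : {y // y ∈ Pη},
            x γ = (∑ α ∈ P', a α * (η α (γ : E) : ℚ))
                + ∑ α ∈ Pη \ P', c α * (if (γ : E) = α then -1 else 0) := by
  intro x
  let X : E → ℚ := fun γ => if hγ : γ ∈ Pη then x ⟨γ, hγ⟩ else 0
  have hdiag : ∀ γ ∈ Pη, η γ γ = 1 := fun γ hγ => ((hPη γ).mp hγ).2
  obtain ⟨S, a, h⟩ := exists_isConeRepr_of_admissible hli hobtuse hcart hval am3 am4 am5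
    (fun γ hγ => ((hPη γ).mp hγ).1) hdiag X
  refine ⟨S, h.subset, fun α hα β hβ hrows => ?_, a, fun β => max (rowComb η S a β - X β) 0,
    h.nonneg, fun _ => le_max_right _ _, fun γ => ?_⟩
  · by_contra hαβ
    exact h.ne_one α hα β hβ hαβ ((hrows β (h.subset hβ)).trans (hdiag β (h.subset hβ)))
  · simpa [X, rowComb] using h.eq_rowComb_sub γ.2

/-- Let `η` be an admissible map on a set `P` of simple roots and set
`Pη = {α ∈ P : η α α = 1}`.  Then `ℚ^{Pη}` is the union of the cones `C_{P'}` over the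
subsets `P' ⊆ Pη` on which `ρ_η` is injective: every `x : Pη → ℚ` is a nonnegative
rational combination of the vectors `ρ_η α` (`α ∈ P'`) and `−ĕ_α` (`α ∈ Pη \ P'`)
for some such subset `P'`.  (Completeness of the fan `𝓕_η`.) -/
theorem admissible_map_fan_complete
    {E : Type*} [NormedAddCommGroup E] [InnerProductSpace ℝ E]
    (P : Finset E)
    (h0 : ∀ α ∈ P, α ≠ (0 : E))
    (hli : LinearIndependent ℝ (fun a : P => (a : E)))
    (hobtuse : ∀ α ∈ P, ∀ β ∈ P, α ≠ β → ⟪α, β⟫ ≤ 0)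
    (hcart : ∀ α ∈ P, ∀ β ∈ P, α ≠ β → ∃ n : ℤ, 2 * ⟪α, β⟫ / ⟪α, α⟫ = (n : ℝ))
    (η : E → E → ℤ)
    (hval : ∀ α ∈ P, ∀ β ∈ P, η α β ∈ ({-3, -2, -1, 0, 1} : Set ℤ))
    (am1 : ∀ α ∈ P, η α α = 0 ∨ η α α = 1)
    (am2 : ∀ α ∈ P, η α α = 0 → ∀ β ∈ P, η α β = 0 ∧ η β α = 0)
    (am3 : ∀ α ∈ P, ∀ β ∈ P, η α β = 1 → ∀ γ ∈ P, η α γ = η β γ)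
    (am4 : ∀ α ∈ P, ∀ β ∈ P, η α β < 0 → η β α = 0)
    (am5 : ∀ α ∈ P, ∀ β ∈ P, α ≠ β → 2 * ⟪α, β⟫ / ⟪α, α⟫ ≤ (η α β : ℝ))
    (Pη : Finset E) (hPη : ∀ α, α ∈ Pη ↔ α ∈ P ∧ η α α = 1) :
    ∀ x : {y // y ∈ Pη} → ℚ,
      ∃ P' : Finset E, P' ⊆ Pη ∧
        (∀ α ∈ P', ∀ β ∈ P', (∀ γ ∈ Pη, η α γ = η β γ) → α = β) ∧
        ∃ a c : E → ℚ, (∀ α, 0 ≤ a α) ∧ (∀ α, 0 ≤ c α) ∧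
          ∀ γ : {y // y ∈ Pη},
            x γ = (∑ α ∈ P', a α * (η α (γ : E) : ℚ))
                + ∑ α ∈ Pη \ P', c α * (if (γ : E) = α then -1 else 0) :=
  admissible_map_fan_complete_general P hli hobtuse hcart η hval am3 am4 am5 Pη hPη
end

section
/- Let η be an admissible map and let Π', Π'' ∈ Π̃_η. Then C_{Π'} ∩ C_{Π''} is exactly the set of nonnegative rational linear combinations of elements of S(Π') ∩ S(Π''). (This is the key step showing that the cones C_{Π'}, Π' ∈ Π̃_η, together with their faces form a fan 𝓕_η.) -/
open scoped RealInnerProductSpace Classical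

/-- The set `S(P') ⊆ ℚ^{Pη}` consisting of the vectors `ρ_η α = (γ ↦ η α γ)` for
`α ∈ P'` together with the vectors `−ĕ_α` for `α ∈ Pη \ P'`. -/
noncomputable def rayVectors {E : Type*} (η : E → E → ℤ) (Pη P' : Finset E) :
    Set ({x // x ∈ Pη} → ℚ) :=
  ((fun α : E => fun γ : {x // x ∈ Pη} => (η α (γ : E) : ℚ)) '' (P' : Set E)) ∪
  ((fun α : E => fun γ : {x // x ∈ Pη} => if (γ : E) = α then (-1 : ℚ) else 0) ''
    ((Pη \ P' : Finset E) : Set E))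

/-- The cone generated by a subset `S` of a ℚ-vector space: the set of all nonnegative
rational linear combinations of elements of `S`. -/
def coneOf {V : Type*} [AddCommGroup V] [Module ℚ V] (S : Set V) : Set V :=
  {x | ∃ (N : ℕ) (v : Fin N → V) (c : Fin N → ℚ),
    (∀ k, v k ∈ S) ∧ (∀ k, 0 ≤ c k) ∧ x = ∑ k, c k • v k}

lemma aux_sum_le_sum_subset_nonpos {ι : Type*} (s t : Finset ι) (f : ι → ℝ)
    (hst : s ⊆ t) (h : ∀ i ∈ t, i ∉ s → f i ≤ 0) :
    ∑ i ∈ t, f i ≤ ∑ i ∈ s, f i := by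
  have := Finset.sum_le_sum_of_subset_of_nonneg (f := fun i => -f i) hst
    (fun i hi his => by simpa using h i hi his)
  simpa using this

lemma aux_sum_ne_zero {E : Type*} [AddCommGroup E] [Module ℝ E] (P : Finset E)
    (hli : LinearIndependent ℝ (fun a : P => (a : E)))
    (T : Finset E) (hT : T ⊆ P) (hne : T.Nonempty) :
    ∑ β ∈ T, β ≠ 0 := by
  intro h
  obtain ⟨β₀, hβ₀⟩ := hne
  have h' := linearIndependent_iff'.mp hli
  set s : Finset {x // x ∈ P} := P.attach.filter (fun i => (i : E) ∈ T) with hs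
  have hsum : ∑ i ∈ s, (1 : ℝ) • (i : E) = ∑ β ∈ T, β := by
    rw [Finset.sum_filter]
    rw [Finset.sum_attach P (fun β => if β ∈ T then (1:ℝ) • β else 0)]
    rw [← Finset.sum_filter]
    simp only [one_smul]
    congr 1
    ext β
    simp only [Finset.mem_filter]
    exact ⟨fun h => h.2, fun h => ⟨hT h, h⟩⟩
  have := h' s (fun _ => (1:ℝ)) (by rw [hsum, h])
  have hmem : (⟨β₀, hT hβ₀⟩ : {x // x ∈ P}) ∈ s := by
    simp [hs, hβ₀]
  exact one_ne_zero (this _ hmem)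

lemma aux_no_cycle {E : Type*} [NormedAddCommGroup E] [InnerProductSpace ℝ E]
    (P : Finset E)
    (h0 : ∀ α ∈ P, α ≠ (0 : E))
    (hli : LinearIndependent ℝ (fun a : P => (a : E)))
    (hobtuse : ∀ α ∈ P, ∀ β ∈ P, α ≠ β → ⟪α, β⟫ ≤ 0)
    (η : E → E → ℤ)
    (am5 : ∀ α ∈ P, ∀ β ∈ P, α ≠ β → 2 * ⟪α, β⟫ / ⟪α, α⟫ ≤ (η α β : ℝ))
    (r : ℕ) (hr : 3 ≤ r) (v : ZMod r → E) (hinj : Function.Injective v)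
    (hvP : ∀ k, v k ∈ P) (hedge : ∀ k, η (v (k + 1)) (v k) < 0) : False := by
  haveI : NeZero r := ⟨by omega⟩
  haveI : Fact (1 < r) := ⟨by omega⟩
  have h1ne : (1 : ZMod r) ≠ 0 := by
    intro h
    have h' : ((1:ℕ) : ZMod r) = 0 := by exact_mod_cast h
    rw [ZMod.natCast_eq_zero_iff] at h'
    have := Nat.le_of_dvd one_pos h'
    omega
  have h2ne : (1 + 1 : ZMod r) ≠ 0 := by
    intro h
    have h' : ((2:ℕ) : ZMod r) = 0 := by
      rw [Nat.cast_ofNat, ← one_add_one_eq_two]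
      exact h
    rw [ZMod.natCast_eq_zero_iff] at h'
    have := Nat.le_of_dvd (by norm_num) h'
    omega
  have hsuccne : ∀ k : ZMod r, k + 1 ≠ k := by
    intro k h
    apply h1ne
    have := congrArg (fun x => x - k) h
    simpa using this
  have hpredne : ∀ k : ZMod r, k - 1 ≠ k := by
    intro k h
    apply h1ne
    have := congrArg (fun x => k - x) h
    simpa using this
  have hsuccpred : ∀ k : ZMod r, k + 1 ≠ k - 1 := by
    intro k h
    apply h2ne
    have := congrArg (fun x => x - (k - 1)) h
    simp only [sub_self] at this
    rw [← this]
    ring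
  have hpos : ∀ k : ZMod r, (0:ℝ) < ⟪v k, v k⟫ := by
    intro k
    rcases lt_or_eq_of_le (real_inner_self_nonneg (x := v k)) with h | h
    · exact h
    · exact absurd (inner_self_eq_zero.mp h.symm) (h0 _ (hvP k))
  have hedge' : ∀ k : ZMod r, ⟪v (k+1), v k⟫ ≤ -(⟪v (k+1), v (k+1)⟫ / 2) := by
    intro k
    have hne : v (k+1) ≠ v k := fun h => hsuccne k (hinj h)
    have h5 := am5 _ (hvP (k+1)) _ (hvP k) hne
    have hη : (η (v (k+1)) (v k) : ℝ) ≤ -1 := by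
      have h6 : η (v (k+1)) (v k) ≤ -1 := by have := hedge k; omega
      have h7 : ((η (v (k+1)) (v k) : ℤ) : ℝ) ≤ ((-1 : ℤ) : ℝ) := Int.cast_le.mpr h6
      simpa using h7
    have hS := hpos (k+1)
    rw [div_le_iff₀ hS] at h5
    nlinarith [mul_le_mul_of_nonneg_right hη (le_of_lt hS)]
  -- the sum
  set u : E := ∑ k : ZMod r, v k with hu
  have hexp : ⟪u, u⟫ = ∑ k : ZMod r, ∑ l : ZMod r, ⟪v k, v l⟫ := by
    rw [hu, sum_inner]
    exact Finset.sum_congr rfl fun k _ => inner_sum _ _ _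
  have hbound : ∀ k : ZMod r, ∑ l : ZMod r, ⟪v k, v l⟫ ≤
      ⟪v k, v k⟫ + ⟪v k, v (k-1)⟫ + ⟪v k, v (k+1)⟫ := by
    intro k
    have hsplit : ∑ l : ZMod r, ⟪v k, v l⟫ =
        ⟪v k, v k⟫ + ∑ l ∈ Finset.univ.erase k, ⟪v k, v l⟫ := by
      rw [← Finset.add_sum_erase _ _ (Finset.mem_univ k)]
    rw [hsplit]
    have hsub : ({k-1, k+1} : Finset (ZMod r)) ⊆ Finset.univ.erase k := by
      intro l hl
      simp only [Finset.mem_insert, Finset.mem_singleton] at hl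
      rcases hl with rfl | rfl
      · exact Finset.mem_erase.mpr ⟨hpredne k, Finset.mem_univ _⟩
      · exact Finset.mem_erase.mpr ⟨hsuccne k, Finset.mem_univ _⟩
    have hle := aux_sum_le_sum_subset_nonpos _ _ (fun l => ⟪v k, v l⟫) hsub
      (fun l hl hls => by
        have : l ≠ k := (Finset.mem_erase.mp hl).1
        exact hobtuse _ (hvP k) _ (hvP l) (fun h => this (hinj h).symm))
    have hpair : ∑ l ∈ ({k-1, k+1} : Finset (ZMod r)), ⟪v k, v l⟫
        = ⟪v k, v (k-1)⟫ + ⟪v k, v (k+1)⟫ := by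
      rw [Finset.sum_insert (by simp [(hsuccpred k).symm] ), Finset.sum_singleton]
    linarith [hle, hpair.le, hpair.ge]
  have hreindex : ∑ k : ZMod r, ⟪v (k+1), v (k+1)⟫ = ∑ k : ZMod r, ⟪v k, v k⟫ := by
    exact Fintype.sum_equiv (Equiv.addRight 1) _ _ (fun k => rfl)
  have hfinal : ⟪u, u⟫ ≤ 0 := by
    rw [hexp]
    have : ∑ k : ZMod r, ∑ l : ZMod r, ⟪v k, v l⟫ ≤
        ∑ k : ZMod r, (⟪v k, v k⟫ + ⟪v k, v (k-1)⟫ + ⟪v k, v (k+1)⟫) :=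
      Finset.sum_le_sum fun k _ => hbound k
    have hterm : ∀ k : ZMod r, ⟪v k, v (k-1)⟫ ≤ -(⟪v k, v k⟫/2) := by
      intro k
      have := hedge' (k - 1)
      simpa [sub_add_cancel] using this
    have hterm2 : ∀ k : ZMod r, ⟪v k, v (k+1)⟫ ≤ -(⟪v (k+1), v (k+1)⟫/2) := by
      intro k
      rw [real_inner_comm]
      exact hedge' k
    have h2 : ∑ k : ZMod r, (⟪v k, v k⟫ + ⟪v k, v (k-1)⟫ + ⟪v k, v (k+1)⟫) ≤
        ∑ k : ZMod r, (⟪v k, v k⟫ - ⟪v k, v k⟫/2 - ⟪v (k+1), v (k+1)⟫/2) := by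
      apply Finset.sum_le_sum
      intro k _
      have := hterm k
      have := hterm2 k
      linarith
    have h3 : ∑ k : ZMod r, (⟪v k, v k⟫ - ⟪v k, v k⟫/2 - ⟪v (k+1), v (k+1)⟫/2) = 0 := by
      rw [Finset.sum_sub_distrib, Finset.sum_sub_distrib]
      have : ∑ k : ZMod r, ⟪v (k+1), v (k+1)⟫/2 = ∑ k : ZMod r, ⟪v k, v k⟫/2 := by
        exact Fintype.sum_equiv (Equiv.addRight 1) _ _ (fun k => rfl)
      rw [this]
      rw [← Finset.sum_div]
      ring
    linarith
  have huz : u = 0 := by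
    have h1 : (0:ℝ) ≤ ⟪u, u⟫ := real_inner_self_nonneg
    have : ⟪u, u⟫ = (0:ℝ) := le_antisymm hfinal h1
    exact_mod_cast inner_self_eq_zero.mp (by exact_mod_cast this)
  -- contradiction with linear independence
  have himg : ∑ β ∈ Finset.univ.image v, β = u := by
    rw [hu, Finset.sum_image (fun a _ b _ h => hinj h)]
  have hne : (Finset.univ.image v).Nonempty := ⟨v 0, Finset.mem_image_of_mem _ (Finset.mem_univ 0)⟩
  exact aux_sum_ne_zero P hli _ (fun β hβ => by
    obtain ⟨k, _, rfl⟩ := Finset.mem_image.mp hβ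
    exact hvP k) hne (by rw [himg, huz])

lemma aux_no_descent {E : Type*} [NormedAddCommGroup E] [InnerProductSpace ℝ E]
    (P : Finset E)
    (h0 : ∀ α ∈ P, α ≠ (0 : E))
    (hli : LinearIndependent ℝ (fun a : P => (a : E)))
    (hobtuse : ∀ α ∈ P, ∀ β ∈ P, α ≠ β → ⟪α, β⟫ ≤ 0)
    (η : E → E → ℤ)
    (am1 : ∀ α ∈ P, η α α = 0 ∨ η α α = 1)
    (am4 : ∀ α ∈ P, ∀ β ∈ P, η α β < 0 → η β α = 0)
    (am5 : ∀ α ∈ P, ∀ β ∈ P, α ≠ β → 2 * ⟪α, β⟫ / ⟪α, α⟫ ≤ (η α β : ℝ))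
(w : ℕ → E) (hwP : ∀ k, w k ∈ P) (hw : ∀ k, η (w (k+1)) (w k) < 0) :
    False := by
  classical
  -- find a repeat
  have : ∃ i j : ℕ, i ≠ j ∧ w i = w j := by
    have := Finite.exists_ne_map_eq_of_infinite (fun k : ℕ => (⟨w k, hwP k⟩ : {x // x ∈ P}))
    obtain ⟨i, j, hij, h⟩ := this
    exact ⟨i, j, hij, congrArg Subtype.val h⟩
  have hQ : ∃ q : ℕ, ∃ p, p < q ∧ w p = w q := by
    obtain ⟨i, j, hij, h⟩ := this
    rcases lt_or_gt_of_ne hij with h' | h'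
    · exact ⟨j, i, h', h⟩
    · exact ⟨i, j, h', h.symm⟩
  set j₀ := Nat.find hQ with hj₀
  obtain ⟨i₀, hi₀, heq⟩ := Nat.find_spec hQ
  rw [← hj₀] at heq hi₀
  have hmin : ∀ q < j₀, ¬ ∃ p, p < q ∧ w p = w q := fun q hq => Nat.find_min hQ hq
  set r := j₀ - i₀ with hrdef
  have hr1 : 1 ≤ r := by omega
  -- injectivity on [i₀, j₀)
  have hinj0 : ∀ p q, i₀ ≤ p → p < q → q < j₀ → w p ≠ w q := by
    intro p q hp hpq hq h
    exact hmin q hq ⟨p, hpq, h⟩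
  rcases Nat.lt_or_ge r 3 with hr3 | hr3
  · -- r = 1 or 2
    interval_cases r
    · -- r = 1 : j₀ = i₀ + 1
      have hj : j₀ = i₀ + 1 := by omega
      have := hw i₀
      rw [hj] at heq
      rw [heq] at this
      rcases am1 _ (hwP (i₀+1)) with h | h <;> omega
    · -- r = 2
      have hj : j₀ = i₀ + 2 := by omega
      have h1 := hw i₀
      have h2 := hw (i₀+1)
      have heq2 : w (i₀ + 2) = w i₀ := by rw [← hj, ← heq]
      rw [heq2] at h2
      have := am4 _ (hwP (i₀+1)) _ (hwP i₀) h1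
      omega
  · -- r ≥ 3
    haveI : NeZero r := ⟨by omega⟩
    haveI : Fact (1 < r) := ⟨by omega⟩
    set v : ZMod r → E := fun k => w (i₀ + k.val) with hv
    have hvP' : ∀ k, v k ∈ P := fun k => hwP _
    have hvinj : Function.Injective v := by
      intro k l h
      by_contra hne
      have hkl : k.val ≠ l.val := fun h' => hne (ZMod.val_injective _ h')
      rcases Nat.lt_or_ge k.val l.val with h' | h'
      · exact hinj0 (i₀ + k.val) (i₀ + l.val) (by omega) (by omega)
          (by have := ZMod.val_lt l; omega) h
      · exact hinj0 (i₀ + l.val) (i₀ + k.val) (by omega) (by omega)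
          (by have := ZMod.val_lt k; omega) h.symm
    have hvedge : ∀ k, η (v (k+1)) (v k) < 0 := by
      intro k
      have hk := ZMod.val_lt k
      have hadd : (k + 1).val = (k.val + 1) % r := by
        rw [ZMod.val_add]
        congr 1
        rw [ZMod.val_one]
      rcases Nat.lt_or_ge (k.val + 1) r with h' | h'
      · have : (k+1).val = k.val + 1 := by rw [hadd, Nat.mod_eq_of_lt h']
        show η (w (i₀ + (k+1).val)) (w (i₀ + k.val)) < 0
        rw [this]
        exact hw (i₀ + k.val)
      · have hkr : k.val + 1 = r := by omega
        have : (k+1).val = 0 := by rw [hadd, hkr, Nat.mod_self]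
        show η (w (i₀ + (k+1).val)) (w (i₀ + k.val)) < 0
        rw [this]
        have hj : i₀ + r = j₀ := by omega
        have : w (i₀ + 0) = w (i₀ + k.val + 1) := by
          rw [Nat.add_zero, heq, ← hj]
          congr 1
          omega
        rw [this]
        exact hw (i₀ + k.val)
    exact aux_no_cycle P h0 hli hobtuse η am5 r hr3 v hvinj hvP' hvedge
lemma aux_sink {E : Type*} [NormedAddCommGroup E] [InnerProductSpace ℝ E]
    (P : Finset E)
    (h0 : ∀ α ∈ P, α ≠ (0 : E))
    (hli : LinearIndependent ℝ (fun a : P => (a : E)))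
    (hobtuse : ∀ α ∈ P, ∀ β ∈ P, α ≠ β → ⟪α, β⟫ ≤ 0)
    (η : E → E → ℤ)
    (am1 : ∀ α ∈ P, η α α = 0 ∨ η α α = 1)
    (am4 : ∀ α ∈ P, ∀ β ∈ P, η α β < 0 → η β α = 0)
    (am5 : ∀ α ∈ P, ∀ β ∈ P, α ≠ β → 2 * ⟪α, β⟫ / ⟪α, α⟫ ≤ (η α β : ℝ))
(T : Finset E) (hT : T ⊆ P) (hne : T.Nonempty) :
    ∃ β₀ ∈ T, ∀ α ∈ T, α ≠ β₀ → 0 ≤ η α β₀ := by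
  by_contra hcon
  push_neg at hcon
  have hstep : ∀ β ∈ T, ∃ α ∈ T, η α β < 0 := by
    intro β hβ
    obtain ⟨α, hα, _, h⟩ := hcon β hβ
    exact ⟨α, hα, h⟩
  have hf : ∀ β : E, ∃ α : E, β ∈ T → (α ∈ T ∧ η α β < 0) := by
    intro β
    by_cases hβ : β ∈ T
    · obtain ⟨α, hα, h⟩ := hstep β hβ
      exact ⟨α, fun _ => ⟨hα, h⟩⟩
    · exact ⟨β, fun h => absurd h hβ⟩
  choose f hfspec using hf
  set w : ℕ → E := fun k => f^[k] hne.choose with hw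
  have hwT : ∀ k, w k ∈ T := by
    intro k
    induction k with
    | zero => exact hne.choose_spec
    | succ k ih =>
      show f^[k+1] hne.choose ∈ T
      rw [Function.iterate_succ_apply']
      exact (hfspec _ ih).1
  have hwe : ∀ k, η (w (k+1)) (w k) < 0 := by
    intro k
    have : w (k+1) = f (w k) := Function.iterate_succ_apply' f k _
    rw [this]
    exact (hfspec _ (hwT k)).2
  exact aux_no_descent P h0 hli hobtuse η am1 am4 am5 w (fun k => hT (hwT k)) hwe
noncomputable def rhoVec {E : Type*} (η : E → E → ℤ) (Pη : Finset E) (α : E) :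
    {x // x ∈ Pη} → ℚ := fun γ => (η α (γ : E) : ℚ)

noncomputable def negVec {E : Type*} (Pη : Finset E) (α : E) :
    {x // x ∈ Pη} → ℚ := fun γ => if (γ : E) = α then (-1 : ℚ) else 0

lemma rayVectors_eq {E : Type*} (η : E → E → ℤ) (Pη P' : Finset E) :
    rayVectors η Pη P' = (rhoVec η Pη '' (P' : Set E)) ∪ (negVec Pη '' ((Pη \ P' : Finset E) : Set E)) := rfl

lemma aux_mem_coneOf {V : Type*} [AddCommGroup V] [Module ℚ V] (S : Set V)
    {ι : Type*} (T : Finset ι) (f : ι → ℚ) (g : ι → V)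
    (hf : ∀ i ∈ T, 0 ≤ f i) (hg : ∀ i ∈ T, f i ≠ 0 → g i ∈ S) :
    (∑ i ∈ T, f i • g i) ∈ coneOf S := by
  classical
  set T' := T.filter (fun i => f i ≠ 0) with hT'
  have hsum : ∑ i ∈ T, f i • g i = ∑ i ∈ T', f i • g i := by
    rw [hT']
    rw [Finset.sum_filter_of_ne]
    intro i _ h hf0
    exact h (by rw [hf0, zero_smul])
  refine ⟨T'.card, fun k => g (T'.equivFin.symm k), fun k => f (T'.equivFin.symm k), ?_, ?_, ?_⟩
  · intro k
    have hm := Finset.mem_filter.mp ((T'.equivFin.symm k).2)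
    exact hg _ hm.1 hm.2
  · intro k
    have hm := Finset.mem_filter.mp ((T'.equivFin.symm k).2)
    exact hf _ hm.1
  · rw [hsum]
    rw [← Finset.sum_attach T' (fun i => f i • g i)]
    exact (Equiv.sum_comp T'.equivFin.symm (fun i => f (i:ι) • g (i:ι))).symm

lemma aux_group {E : Type*} (η : E → E → ℤ) (Pη : Finset E) (n : E → ℚ)
    (Z : Finset E) (hZ : Z ⊆ Pη)
    (hclosed : ∀ α ∈ Z, ∀ β ∈ Pη, rhoVec η Pη β = rhoVec η Pη α → β ∈ Z)
    (hsum : ∀ α ∈ Z, ∑ β ∈ Pη.filter (fun β => rhoVec η Pη β = rhoVec η Pη α), n β = 0)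
    (F : ({x // x ∈ Pη} → ℚ) → ℚ) :
    ∑ α ∈ Z, n α * F (rhoVec η Pη α) = 0 := by
  classical
  rw [← Finset.sum_fiberwise_of_maps_to (g := fun α => rhoVec η Pη α)
    (t := Z.image (fun α => rhoVec η Pη α)) (fun α hα => Finset.mem_image_of_mem _ hα)]
  apply Finset.sum_eq_zero
  intro y hy
  obtain ⟨α₀, hα₀, hyα₀⟩ := Finset.mem_image.mp hy
  have hfe : ∀ β ∈ Z.filter (fun β => rhoVec η Pη β = y), n β * F (rhoVec η Pη β) = n β * F y := by
    intro β hβ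
    rw [(Finset.mem_filter.mp hβ).2]
  rw [Finset.sum_congr rfl hfe, ← Finset.sum_mul]
  have hfilter : Z.filter (fun β => rhoVec η Pη β = y) =
      Pη.filter (fun β => rhoVec η Pη β = rhoVec η Pη α₀) := by
    ext β
    simp only [Finset.mem_filter, ← hyα₀]
    exact ⟨fun h => ⟨hZ h.1, h.2⟩, fun h => ⟨hclosed α₀ hα₀ β h.1 h.2, h.2⟩⟩
  rw [hfilter, hsum α₀ hα₀, zero_mul]

lemma rho_ne_neg {E : Type*} (η : E → E → ℤ) (Pη : Finset E)
    (hdiag : ∀ γ ∈ Pη, η γ γ = 1) {α γ₀ : E} (hα : α ∈ Pη) :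
    rhoVec η Pη α ≠ negVec Pη γ₀ := by
  intro h
  have := congrFun h ⟨α, hα⟩
  simp only [rhoVec, negVec, hdiag α hα] at this
  split at this <;> norm_num at this

lemma neg_inj_on {E : Type*} (Pη : Finset E) {γ γ₀ : E} (hγ₀ : γ₀ ∈ Pη)
    (h : negVec Pη γ = negVec Pη γ₀) : γ = γ₀ := by
  by_contra hne
  have := congrFun h ⟨γ₀, hγ₀⟩
  simp only [negVec] at this
  rw [if_neg (fun h' : γ₀ = γ => hne h'.symm)] at this
  simp at this

lemma aux_split {E : Type*} (η : E → E → ℤ) (Pη P₀ : Finset E) (hP₀ : P₀ ⊆ Pη)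
    (hdiag : ∀ γ ∈ Pη, η γ γ = 1)
    (hinj : ∀ α ∈ P₀, ∀ β ∈ P₀, rhoVec η Pη α = rhoVec η Pη β → α = β)
    (x : {x // x ∈ Pη} → ℚ) (hx : x ∈ coneOf (rayVectors η Pη P₀)) :
    ∃ a b : E → ℚ, (∀ α, 0 ≤ a α) ∧ (∀ γ, 0 ≤ b γ) ∧
      x = (∑ α ∈ P₀, a α • rhoVec η Pη α) + ∑ γ₀ ∈ Pη \ P₀, b γ₀ • negVec Pη γ₀ := by
  classical
  obtain ⟨N, v, c, hv, hc, hxs⟩ := hx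
  refine ⟨fun α => ∑ k ∈ Finset.univ.filter (fun k => v k = rhoVec η Pη α), c k,
          fun γ₀ => ∑ k ∈ Finset.univ.filter (fun k => v k = negVec Pη γ₀), c k,
          fun α => Finset.sum_nonneg (fun k _ => hc k),
          fun γ₀ => Finset.sum_nonneg (fun k _ => hc k), ?_⟩
  rw [hxs]
  have hA : ∀ α ∈ P₀, (∑ k ∈ Finset.univ.filter (fun k => v k = rhoVec η Pη α), c k) • rhoVec η Pη α
      = ∑ k ∈ Finset.univ.filter (fun k => v k = rhoVec η Pη α), c k • v k := by
    intro α _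
    rw [Finset.sum_smul]
    exact Finset.sum_congr rfl fun k hk => by rw [(Finset.mem_filter.mp hk).2]
  have hB : ∀ γ₀ ∈ Pη \ P₀, (∑ k ∈ Finset.univ.filter (fun k => v k = negVec Pη γ₀), c k) • negVec Pη γ₀
      = ∑ k ∈ Finset.univ.filter (fun k => v k = negVec Pη γ₀), c k • v k := by
    intro γ₀ _
    rw [Finset.sum_smul]
    exact Finset.sum_congr rfl fun k hk => by rw [(Finset.mem_filter.mp hk).2]
  rw [Finset.sum_congr rfl hA, Finset.sum_congr rfl hB]
  -- swap sums
  have swapA : ∑ α ∈ P₀, ∑ k ∈ Finset.univ.filter (fun k => v k = rhoVec η Pη α), c k • v k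
      = ∑ k : Fin N, ∑ α ∈ P₀.filter (fun α => v k = rhoVec η Pη α), c k • v k := by
    simp_rw [Finset.sum_filter]
    rw [Finset.sum_comm]
  have swapB : ∑ γ₀ ∈ Pη \ P₀, ∑ k ∈ Finset.univ.filter (fun k => v k = negVec Pη γ₀), c k • v k
      = ∑ k : Fin N, ∑ γ₀ ∈ (Pη \ P₀).filter (fun γ₀ => v k = negVec Pη γ₀), c k • v k := by
    simp_rw [Finset.sum_filter]
    rw [Finset.sum_comm]
  rw [swapA, swapB, ← Finset.sum_add_distrib]
  apply Finset.sum_congr rfl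
  intro k _
  rcases hv k with ⟨α₀, hα₀, hvk0⟩ | ⟨γ₀, hγ₀, hvk0⟩
  · -- v k = rhoVec α₀
    have hvk : rhoVec η Pη α₀ = v k := hvk0
    have hα₀' : α₀ ∈ P₀ := hα₀
    have h1 : ∑ α ∈ P₀.filter (fun α => v k = rhoVec η Pη α), c k • v k = c k • v k := by
      rw [Finset.sum_const]
      have : P₀.filter (fun α => v k = rhoVec η Pη α) = {α₀} := by
        ext α
        simp only [Finset.mem_filter, Finset.mem_singleton]
        constructor
        · rintro ⟨hαP, hvα⟩
          exact hinj α hαP α₀ hα₀' (by rw [← hvα, ← hvk])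
        · rintro rfl
          exact ⟨hα₀', hvk.symm⟩
      rw [this, Finset.card_singleton, one_smul]
    have h2 : ∑ γ₀ ∈ (Pη \ P₀).filter (fun γ₀ => v k = negVec Pη γ₀), c k • v k = 0 := by
      apply Finset.sum_eq_zero
      intro γ hγ
      exfalso
      have hvγ := (Finset.mem_filter.mp hγ).2
      exact rho_ne_neg η Pη hdiag (hP₀ hα₀') (by rw [hvk, hvγ])
    rw [h1, h2, add_zero]
  · -- v k = negVec γ₀
    have hvk : negVec Pη γ₀ = v k := hvk0
    have hγ₀' : γ₀ ∈ Pη \ P₀ := hγ₀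
    have hγ₀Pη : γ₀ ∈ Pη := (Finset.mem_sdiff.mp hγ₀').1
    have h1 : ∑ α ∈ P₀.filter (fun α => v k = rhoVec η Pη α), c k • v k = 0 := by
      apply Finset.sum_eq_zero
      intro α hα
      exfalso
      have hvα := (Finset.mem_filter.mp hα).2
      exact rho_ne_neg η Pη hdiag (hP₀ (Finset.mem_filter.mp hα).1) (by rw [← hvα, ← hvk])
    have h2 : ∑ γ ∈ (Pη \ P₀).filter (fun γ => v k = negVec Pη γ), c k • v k = c k • v k := by
      rw [Finset.sum_const]
      have : (Pη \ P₀).filter (fun γ => v k = negVec Pη γ) = {γ₀} := by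
        ext γ
        simp only [Finset.mem_filter, Finset.mem_singleton]
        constructor
        · rintro ⟨hγP, hvγ⟩
          exact neg_inj_on Pη hγ₀Pη (by rw [← hvγ, ← hvk])
        · rintro rfl
          exact ⟨hγ₀', hvk.symm⟩
      rw [this, Finset.card_singleton, one_smul]
    rw [h1, h2, zero_add]

lemma aux_coord {E : Type*} (η : E → E → ℤ) (Pη P₀ : Finset E)
    (a b : E → ℚ) (x : {x // x ∈ Pη} → ℚ)
    (heq : x = (∑ α ∈ P₀, a α • rhoVec η Pη α) + ∑ γ₀ ∈ Pη \ P₀, b γ₀ • negVec Pη γ₀)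
    (γ₀ : E) (h : γ₀ ∈ Pη) :
    x ⟨γ₀, h⟩ = (∑ α ∈ P₀, a α * (η α γ₀ : ℚ)) - (if γ₀ ∈ P₀ then 0 else b γ₀) := by
  have := congrFun heq ⟨γ₀, h⟩
  rw [this]
  simp only [Pi.add_apply, Finset.sum_apply, Pi.smul_apply, smul_eq_mul, rhoVec, negVec]
  have h2 : ∑ γ ∈ Pη \ P₀, b γ * (if γ₀ = γ then (-1:ℚ) else 0)
      = if γ₀ ∈ Pη \ P₀ then -(b γ₀) else 0 := by
    rw [← Finset.sum_ite_eq (Pη \ P₀) γ₀ (fun γ => -(b γ))]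
    apply Finset.sum_congr rfl
    intro γ _
    split <;> ring
  rw [h2]
  by_cases hγ₀ : γ₀ ∈ P₀ <;> simp [hγ₀, Finset.mem_sdiff, h, sub_eq_add_neg]

/-- Let `η` be an admissible map on a set `P` of simple roots, set
`Pη = {α ∈ P : η α α = 1}`, and let `P', P'' ⊆ Pη` be subsets on which `ρ_η` is
injective.  Then `C_{P'} ∩ C_{P''}` is exactly the cone generated by
`S(P') ∩ S(P'')`.  (Key step showing the cones `C_{P'}` and their faces form a fan.) -/
theorem admissible_map_cone_intersection
    {E : Type*} [NormedAddCommGroup E] [InnerProductSpace ℝ E]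
    (P : Finset E)
    (h0 : ∀ α ∈ P, α ≠ (0 : E))
    (hli : LinearIndependent ℝ (fun a : P => (a : E)))
    (hobtuse : ∀ α ∈ P, ∀ β ∈ P, α ≠ β → ⟪α, β⟫ ≤ 0)
    (hcart : ∀ α ∈ P, ∀ β ∈ P, α ≠ β → ∃ n : ℤ, 2 * ⟪α, β⟫ / ⟪α, α⟫ = (n : ℝ))
    (η : E → E → ℤ)
    (hval : ∀ α ∈ P, ∀ β ∈ P, η α β ∈ ({-3, -2, -1, 0, 1} : Set ℤ))
    (am1 : ∀ α ∈ P, η α α = 0 ∨ η α α = 1)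
    (am2 : ∀ α ∈ P, η α α = 0 → ∀ β ∈ P, η α β = 0 ∧ η β α = 0)
    (am3 : ∀ α ∈ P, ∀ β ∈ P, η α β = 1 → ∀ γ ∈ P, η α γ = η β γ)
    (am4 : ∀ α ∈ P, ∀ β ∈ P, η α β < 0 → η β α = 0)
    (am5 : ∀ α ∈ P, ∀ β ∈ P, α ≠ β → 2 * ⟪α, β⟫ / ⟪α, α⟫ ≤ (η α β : ℝ))
    (Pη : Finset E) (hPη : ∀ α, α ∈ Pη ↔ α ∈ P ∧ η α α = 1)
    (P' P'' : Finset E) (hP' : P' ⊆ Pη) (hP'' : P'' ⊆ Pη)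
    (hinj' : ∀ α ∈ P', ∀ β ∈ P', (∀ γ ∈ Pη, η α γ = η β γ) → α = β)
    (hinj'' : ∀ α ∈ P'', ∀ β ∈ P'', (∀ γ ∈ Pη, η α γ = η β γ) → α = β) :
    coneOf (rayVectors η Pη P') ∩ coneOf (rayVectors η Pη P'')
      = coneOf (rayVectors η Pη P' ∩ rayVectors η Pη P'') := by
  classical
  have hPsub : Pη ⊆ P := fun α h => ((hPη α).mp h).1
  have hdiag : ∀ γ ∈ Pη, η γ γ = 1 := fun γ h => ((hPη γ).mp h).2
  -- row equalities
  have hrow_of_one : ∀ α ∈ Pη, ∀ β ∈ Pη, η α β = 1 → rhoVec η Pη α = rhoVec η Pη β := by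
    intro α hα β hβ h
    funext γ
    have := am3 α (hPsub hα) β (hPsub hβ) h γ (hPsub γ.2)
    simp only [rhoVec]
    exact_mod_cast this
  have hone_of_row : ∀ α : E, ∀ β ∈ Pη, rhoVec η Pη α = rhoVec η Pη β → η α β = 1 := by
    intro α β hβ h
    have := congrFun h ⟨β, hβ⟩
    simp only [rhoVec] at this
    have h2 : (η α β : ℚ) = (η β β : ℚ) := this
    rw [hdiag β hβ] at h2
    exact_mod_cast h2
  have hle0 : ∀ α ∈ Pη, ∀ β ∈ Pη, rhoVec η Pη α ≠ rhoVec η Pη β → η α β ≤ 0 := by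
    intro α hα β hβ hne
    by_contra h
    push_neg at h
    have hv := hval α (hPsub hα) β (hPsub hβ)
    simp only [Set.mem_insert_iff, Set.mem_singleton_iff] at hv
    have h1 : η α β = 1 := by omega
    exact hne (hrow_of_one α hα β hβ h1)
  have hinjV' : ∀ α ∈ P', ∀ β ∈ P', rhoVec η Pη α = rhoVec η Pη β → α = β := by
    intro α hα β hβ h
    refine hinj' α hα β hβ fun γ hγ => ?_
    have := congrFun h ⟨γ, hγ⟩
    simpa only [rhoVec, Int.cast_inj] using this
  have hinjV'' : ∀ α ∈ P'', ∀ β ∈ P'', rhoVec η Pη α = rhoVec η Pη β → α = β := by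
    intro α hα β hβ h
    refine hinj'' α hα β hβ fun γ hγ => ?_
    have := congrFun h ⟨γ, hγ⟩
    simpa only [rhoVec, Int.cast_inj] using this
  apply Set.Subset.antisymm
  · -- hard direction
    rintro x ⟨hx1, hx2⟩
    obtain ⟨a, b, ha, hb, E1⟩ := aux_split η Pη P' hP' hdiag hinjV' x hx1
    obtain ⟨c, d, hc, hd, E2⟩ := aux_split η Pη P'' hP'' hdiag hinjV'' x hx2
    set n : E → ℚ := fun γ => (if γ ∈ P' then a γ else 0) - (if γ ∈ P'' then c γ else 0)
      with hn
    -- the key identity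
    have hm : ∀ γ₀ ∈ Pη, ∑ α ∈ Pη, n α * (η α γ₀ : ℚ)
        = (if γ₀ ∈ P' then 0 else b γ₀) - (if γ₀ ∈ P'' then 0 else d γ₀) := by
      intro γ₀ h
      have c1 := aux_coord η Pη P' a b x E1 γ₀ h
      have c2 := aux_coord η Pη P'' c d x E2 γ₀ h
      have hsplit : ∑ α ∈ Pη, n α * (η α γ₀ : ℚ)
          = (∑ α ∈ P', a α * (η α γ₀ : ℚ)) - ∑ α ∈ P'', c α * (η α γ₀ : ℚ) := by
        simp_rw [hn, sub_mul, ite_mul, zero_mul]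
        rw [Finset.sum_sub_distrib, Finset.sum_ite_mem, Finset.sum_ite_mem,
          Finset.inter_eq_right.mpr hP', Finset.inter_eq_right.mpr hP'']
      rw [hsplit]
      have := c1.symm.trans c2
      linarith [this]
    -- class sums
    set cs : E → ℚ :=
      fun γ => ∑ β ∈ Pη.filter (fun β => rhoVec η Pη β = rhoVec η Pη γ), n β with hcs
    have hcs_congr : ∀ γ₁ γ₂, rhoVec η Pη γ₁ = rhoVec η Pη γ₂ → cs γ₁ = cs γ₂ := by
      intro γ₁ γ₂ h
      simp only [hcs, h]
    -- sign facts for n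
    have hn_pos_mem : ∀ α, 0 < n α → α ∈ P' := by
      intro α h
      by_contra hmem
      have : n α ≤ 0 := by
        simp only [hn, if_neg hmem]
        split <;> [skip; simp]
        · simp only [zero_sub, neg_nonpos]
          next h' => exact hc α
      linarith
    have hn_neg_mem : ∀ α, n α < 0 → α ∈ P'' := by
      intro α h
      by_contra hmem
      have : 0 ≤ n α := by
        simp only [hn, if_neg hmem, sub_zero]
        split <;> [exact ha α; rfl]
      linarith
    -- representative of a nonzero class
    have hrep : ∀ γ ∈ Pη, cs γ ≠ 0 → ∃ t ∈ Pη, rhoVec η Pη t = rhoVec η Pη γ ∧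
        cs t = cs γ ∧ ((0 < cs t ∧ t ∈ P') ∨ (cs t < 0 ∧ t ∈ P'')) := by
      intro γ hγ hne
      rcases lt_or_gt_of_ne hne with hlt | hgt
      · -- cs γ < 0 : find β in fiber with n β < 0
        have : ∃ β ∈ Pη.filter (fun β => rhoVec η Pη β = rhoVec η Pη γ), n β < 0 := by
          by_contra hall
          push_neg at hall
          have : (0:ℚ) ≤ cs γ := Finset.sum_nonneg hall
          linarith
        obtain ⟨β, hβf, hβn⟩ := this
        have hβPη := (Finset.mem_filter.mp hβf).1
        have hβρ := (Finset.mem_filter.mp hβf).2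
        have hcseq := hcs_congr β γ hβρ
        exact ⟨β, hβPη, hβρ, hcseq, Or.inr ⟨by rw [hcseq]; exact hlt, hn_neg_mem β hβn⟩⟩
      · have : ∃ β ∈ Pη.filter (fun β => rhoVec η Pη β = rhoVec η Pη γ), 0 < n β := by
          by_contra hall
          push_neg at hall
          have : cs γ ≤ 0 := Finset.sum_nonpos hall
          linarith
        obtain ⟨β, hβf, hβn⟩ := this
        have hβPη := (Finset.mem_filter.mp hβf).1
        have hβρ := (Finset.mem_filter.mp hβf).2
        have hcseq := hcs_congr β γ hβρ
        exact ⟨β, hβPη, hβρ, hcseq, Or.inl ⟨by rw [hcseq]; exact hgt, hn_pos_mem β hβn⟩⟩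
    -- core claim: all class sums vanish
    have hcore : ∀ γ ∈ Pη, cs γ = 0 := by
      by_contra hcon
      push_neg at hcon
      obtain ⟨γ₁, hγ₁Pη, hγ₁⟩ := hcon
      set T : Finset E := Pη.filter (fun t => (0 < cs t ∧ t ∈ P') ∨ (cs t < 0 ∧ t ∈ P''))
        with hT
      have hTne : T.Nonempty := by
        obtain ⟨t, htPη, _, _, hprop⟩ := hrep γ₁ hγ₁Pη hγ₁
        exact ⟨t, Finset.mem_filter.mpr ⟨htPη, hprop⟩⟩
      have hTP : T ⊆ P := fun t ht => hPsub (Finset.mem_filter.mp ht).1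
      obtain ⟨β₀, hβ₀T, hsink⟩ := aux_sink P h0 hli hobtuse η am1 am4 am5 T hTP hTne
      have hβ₀Pη : β₀ ∈ Pη := (Finset.mem_filter.mp hβ₀T).1
      have hβ₀prop := (Finset.mem_filter.mp hβ₀T).2
      -- compute M = ∑ α∈Pη, n α * η α β₀
      have hMsplit := Finset.sum_filter_add_sum_filter_not Pη
        (fun α => rhoVec η Pη α = rhoVec η Pη β₀) (fun α => n α * (η α β₀ : ℚ))
      have hpart1 : ∑ α ∈ Pη.filter (fun α => rhoVec η Pη α = rhoVec η Pη β₀),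
          n α * (η α β₀ : ℚ) = cs β₀ := by
        rw [hcs]
        apply Finset.sum_congr rfl
        intro α hα
        have hρ := (Finset.mem_filter.mp hα).2
        have : η α β₀ = 1 := hone_of_row α β₀ hβ₀Pη hρ
        rw [this]
        norm_num
      set R : Finset E := Pη.filter (fun α => ¬ rhoVec η Pη α = rhoVec η Pη β₀) with hR
      have hpart2 : ∑ α ∈ R, n α * (η α β₀ : ℚ) = 0 := by
        have hRsplit := Finset.sum_filter_add_sum_filter_not R
          (fun α => cs α = 0) (fun α => n α * (η α β₀ : ℚ))
        have hz : ∑ α ∈ R.filter (fun α => cs α = 0), n α * (η α β₀ : ℚ) = 0 := by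
          have := aux_group η Pη n (R.filter (fun α => cs α = 0))
            (fun α hα => (Finset.mem_filter.mp (Finset.mem_filter.mp hα).1).1)
            (by
              intro α hα β hβ hρ
              have hα1 := Finset.mem_filter.mp hα
              have hα2 := Finset.mem_filter.mp hα1.1
              refine Finset.mem_filter.mpr ⟨Finset.mem_filter.mpr ⟨hβ, ?_⟩, ?_⟩
              · rw [hρ]; exact hα2.2
              · rw [hcs_congr β α hρ]; exact hα1.2)
            (by
              intro α hα
              exact (Finset.mem_filter.mp hα).2)
            (fun y => y ⟨β₀, hβ₀Pη⟩)
          exact this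
        have hnz : ∑ α ∈ R.filter (fun α => ¬ cs α = 0), n α * (η α β₀ : ℚ) = 0 := by
          apply Finset.sum_eq_zero
          intro α hα
          have hα1 := Finset.mem_filter.mp hα
          have hα2 := Finset.mem_filter.mp hα1.1
          obtain ⟨t, htPη, htρ, htcs, htprop⟩ := hrep α hα2.1 hα1.2
          have htT : t ∈ T := Finset.mem_filter.mpr ⟨htPη, htprop⟩
          have htne : t ≠ β₀ := by
            intro h
            rw [h] at htρ
            exact hα2.2 htρ.symm
          have h1 : 0 ≤ η t β₀ := hsink t htT htne
          have h2 : η t β₀ ≤ 0 := hle0 t htPη β₀ hβ₀Pη (by rw [htρ]; exact hα2.2)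
          have h3 : η t β₀ = 0 := le_antisymm h2 h1
          have h4 : (η α β₀ : ℚ) = (η t β₀ : ℚ) := by
            have := congrFun htρ ⟨β₀, hβ₀Pη⟩
            exact this.symm
          rw [h4, h3]
          norm_num
        linarith [hRsplit, hz, hnz]
      have hM : ∑ α ∈ Pη, n α * (η α β₀ : ℚ) = cs β₀ := by
        rw [← hMsplit, hpart1]
        rw [← hR] at *
        rw [hpart2, add_zero]
      have hmβ₀ := hm β₀ hβ₀Pη
      rw [hM] at hmβ₀
      rcases hβ₀prop with ⟨hpos, hmem⟩ | ⟨hneg, hmem⟩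
      · rw [if_pos hmem] at hmβ₀
        have : cs β₀ ≤ 0 := by
          rw [hmβ₀]
          split <;> [linarith; linarith [hd β₀]]
        linarith
      · rw [if_pos hmem] at hmβ₀
        have : 0 ≤ cs β₀ := by
          rw [hmβ₀]
          split <;> [linarith; linarith [hb β₀]]
        linarith
    -- m = 0 everywhere
    have hm0 : ∀ γ₀, ∀ h : γ₀ ∈ Pη, ∑ α ∈ Pη, n α * (η α γ₀ : ℚ) = 0 := by
      intro γ₀ h
      have := aux_group η Pη n Pη (le_refl Pη)
        (fun α _ β hβ _ => hβ)
        (fun α hα => hcore α hα)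
        (fun y => y ⟨γ₀, h⟩)
      exact this
    have hbd : ∀ γ₀ ∈ Pη, (if γ₀ ∈ P' then 0 else b γ₀) = (if γ₀ ∈ P'' then 0 else d γ₀) := by
      intro γ₀ h
      have := hm γ₀ h
      rw [hm0 γ₀ h] at this
      linarith
    -- final construction
    set f : E → ℚ := fun γ => if γ ∈ P' then a γ else b γ with hf
    set g : E → ({x // x ∈ Pη} → ℚ) := fun γ => if γ ∈ P' then rhoVec η Pη γ else negVec Pη γ
      with hg
    have hxsum : x = ∑ γ ∈ Pη, f γ • g γ := by
      rw [E1]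
      rw [← Finset.sum_filter_add_sum_filter_not Pη (fun γ => γ ∈ P') (fun γ => f γ • g γ)]
      have e1 : Pη.filter (fun γ => γ ∈ P') = P' := by
        rw [Finset.filter_mem_eq_inter, Finset.inter_eq_right.mpr hP']
      have e2 : Pη.filter (fun γ => ¬ γ ∈ P') = Pη \ P' := by
        rw [Finset.sdiff_eq_filter]
      rw [e1, e2]
      congr 1
      · apply Finset.sum_congr rfl
        intro γ hγ
        simp only [hf, hg, if_pos hγ]
      · apply Finset.sum_congr rfl
        intro γ hγ
        have := (Finset.mem_sdiff.mp hγ).2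
        simp only [hf, hg, if_neg this]
    rw [hxsum]
    apply aux_mem_coneOf
    · intro i _
      simp only [hf]
      split <;> [exact ha i; exact hb i]
    · intro i hi hfi
      by_cases hiP' : i ∈ P'
      · simp only [hg, if_pos hiP']
        constructor
        · -- in rayVectors P'
          rw [rayVectors_eq]
          exact Set.mem_union_left _ ⟨i, hiP', rfl⟩
        · -- in rayVectors P''
          rw [rayVectors_eq]
          apply Set.mem_union_left
          have hai : a i ≠ 0 := by simpa only [hf, if_pos hiP'] using hfi
          by_cases hiP'' : i ∈ P''
          · exact ⟨i, hiP'', rfl⟩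
          · -- use hcore
            have hiPη := hP' hiP'
            have hcsi := hcore i hiPη
            have : ∃ β ∈ Pη.filter (fun β => rhoVec η Pη β = rhoVec η Pη i), β ∈ P'' := by
              by_contra hno
              push_neg at hno
              have hnonneg : ∀ β ∈ Pη.filter (fun β => rhoVec η Pη β = rhoVec η Pη i),
                  0 ≤ n β := by
                intro β hβ
                have hβnP'' := hno β hβ
                simp only [hn, if_neg hβnP'', sub_zero]
                split <;> [exact ha β; rfl]
              have hall := (Finset.sum_eq_zero_iff_of_nonneg hnonneg).mp hcsi
              have himem : i ∈ Pη.filter (fun β => rhoVec η Pη β = rhoVec η Pη i) :=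
                Finset.mem_filter.mpr ⟨hiPη, rfl⟩
              have := hall i himem
              simp only [hn, if_pos hiP', if_neg hiP'', sub_zero] at this
              exact hai this
            obtain ⟨β, hβf, hβP''⟩ := this
            exact ⟨β, hβP'', (Finset.mem_filter.mp hβf).2⟩
      · simp only [hg, if_neg hiP']
        have hbi : b i ≠ 0 := by simpa only [hf, if_neg hiP'] using hfi
        have hiP'' : i ∉ P'' := by
          intro hiP''
          have := hbd i hi
          rw [if_neg hiP', if_pos hiP''] at this
          exact hbi this
        constructor
        · rw [rayVectors_eq]
          exact Set.mem_union_right _ ⟨i, Finset.mem_sdiff.mpr ⟨hi, hiP'⟩, rfl⟩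
        · rw [rayVectors_eq]
          exact Set.mem_union_right _ ⟨i, Finset.mem_sdiff.mpr ⟨hi, hiP''⟩, rfl⟩
  · -- easy direction
    rintro x ⟨N, v, c, hv, hc, rfl⟩
    exact ⟨⟨N, v, c, fun k => (hv k).1, hc, rfl⟩, ⟨N, v, c, fun k => (hv k).2, hc, rfl⟩⟩
end

section
/- Every element of Q is a nonnegative rational linear combination of elements of 𝒱 ∪ {v_D : D ∈ 𝒟'} (i.e., the cone generated by 𝒱 together with the v_D is all of Q) if and only if there exist strictly positive rational numbers (n_D)_{D ∈ 𝒟'} such that σ(Σ_{D ∈ 𝒟'} n_D v_D) > 0 for every σ ∈ Σ. -/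
/-!
If `w = ∑ n_d v_d` pairs positively with every `σ`, then any `x` differs from `t • w`, for `t`
large, by an element of the antidominant cone. Conversely, since the `σ` are linearly
independent there is `x` with `σ x = 1` for every `σ`; writing `x - ∑ v_d` as an antidominant
vector plus `∑ m_d v_d` with `m_d ≥ 0` gives `σ (∑ (m_d + 1) v_d) ≥ σ x = 1`.
-/

open Module Set Filter PointedCone

theorem LinearMap.pi_surjective_of_linearIndependent {ι K V : Type*} [Finite ι] [Field K]
    [AddCommGroup V] [Module K V] {σ : ι → Dual K V} (hσ : LinearIndependent K σ) :
    Function.Surjective (LinearMap.pi σ) := by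
  have hfun : LinearIndependent K fun i ↦ ⇑(σ i) :=
    hσ.map' (LinearMap.ltoFun K V K K) (LinearMap.ker_eq_bot.2 DFunLike.coe_injective)
  rw [← LinearMap.range_eq_top, ← Submodule.span_eq (LinearMap.range _), LinearMap.coe_range]
  exact span_flip_eq_top_iff_linearIndependent.2 hfun

namespace PointedCone

theorem mem_hull_iff_exists_fin {R E : Type*} [Semiring R] [PartialOrder R] [IsOrderedRing R]
    [AddCommMonoid E] [Module R E] {s : Set E} {x : E} :
    x ∈ hull R s ↔ ∃ (N : ℕ) (u : Fin N → E) (c : Fin N → R),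
      (∀ k, u k ∈ s) ∧ (∀ k, 0 ≤ c k) ∧ x = ∑ k, c k • u k := by
  rw [hull, Submodule.mem_span_set']
  constructor
  · rintro ⟨N, c, u, rfl⟩
    exact ⟨N, fun k ↦ u k, fun k ↦ c k, fun k ↦ (u k).2, fun k ↦ (c k).2, rfl⟩
  · rintro ⟨N, u, c, hu, hc, rfl⟩
    exact ⟨N, fun k ↦ ⟨c k, hc k⟩, fun k ↦ ⟨u k, hu k⟩, rfl⟩

variable {𝕜 E : Type*} [Field 𝕜] [LinearOrder 𝕜] [IsStrictOrderedRing 𝕜]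
  [AddCommGroup E] [Module 𝕜 E]

theorem mem_hull_union_range_iff {D : Type*} [Fintype D] (C : PointedCone 𝕜 E) (v : D → E)
    {x : E} : x ∈ hull 𝕜 (C ∪ range v) ↔
      ∃ a ∈ C, ∃ m : D → 𝕜, (∀ d, 0 ≤ m d) ∧ x = a + ∑ d, m d • v d := by
  rw [hull, Submodule.span_union, Submodule.span_eq, Submodule.mem_sup]
  simp only [Submodule.mem_span_range_iff_exists_fun]
  constructor
  · rintro ⟨a, ha, _, ⟨m, rfl⟩, rfl⟩
    exact ⟨a, ha, fun d ↦ m d, fun d ↦ (m d).2, rfl⟩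
  · rintro ⟨a, ha, m, hm, rfl⟩
    exact ⟨a, ha, _, ⟨fun d ↦ ⟨m d, hm d⟩, rfl⟩, rfl⟩

end PointedCone

section Antidominant

variable {𝕜 E ι : Type*} [Field 𝕜] [LinearOrder 𝕜] [IsStrictOrderedRing 𝕜]
  [AddCommGroup E] [Module 𝕜 E]

def antidominantCone (σ : ι → Dual 𝕜 E) : PointedCone 𝕜 E where
  carrier := {q | ∀ i, σ i q ≤ 0}
  add_mem' hx hy i := by simpa using add_nonpos (hx i) (hy i)
  zero_mem' i := by simp
  smul_mem' c x hx i := by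
    simpa [← Nonneg.coe_smul] using mul_nonpos_of_nonneg_of_nonpos c.2 (hx i)

variable [Finite ι] {D : Type*} [Fintype D] (σ : ι → Dual 𝕜 E) (v : D → E)

theorem exists_sub_smul_mem_antidominantCone {w : E} (hw : ∀ i, 0 < σ i w) (x : E) :
    ∃ t : 𝕜, 0 ≤ t ∧ x - t • w ∈ antidominantCone σ := by
  have hlarge : ∀ᶠ t : 𝕜 in atTop, 0 ≤ t ∧ x - t • w ∈ antidominantCone σ := by
    refine (eventually_ge_atTop 0).and (eventually_all.2 fun i ↦ ?_)
    filter_upwards [eventually_ge_atTop (σ i x / σ i w)] with t ht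
    simpa using (div_le_iff₀ (hw i)).1 ht
  exact hlarge.exists

theorem hull_antidominantCone_union_range_eq_top_of_pos {n : D → 𝕜} (hn : ∀ d, 0 ≤ n d)
    (hpos : ∀ i, 0 < σ i (∑ d, n d • v d)) :
    hull 𝕜 (antidominantCone σ ∪ range v) = ⊤ := by
  refine eq_top_iff.2 fun x _ ↦ ?_
  obtain ⟨t, ht, hxt⟩ := exists_sub_smul_mem_antidominantCone σ hpos x
  refine (mem_hull_union_range_iff _ v).2
    ⟨_, hxt, fun d ↦ t * n d, fun d ↦ mul_nonneg ht (hn d), ?_⟩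
  simp [Finset.smul_sum, smul_smul]

theorem exists_pos_of_hull_antidominantCone_union_range_eq_top (hσ : LinearIndependent 𝕜 σ)
    (htop : hull 𝕜 (antidominantCone σ ∪ range v) = ⊤) :
    ∃ n : D → 𝕜, (∀ d, 0 < n d) ∧ ∀ i, 0 < σ i (∑ d, n d • v d) := by
  obtain ⟨x, hx⟩ := LinearMap.pi_surjective_of_linearIndependent hσ 1
  have hmem : x - ∑ d, v d ∈ hull 𝕜 (antidominantCone σ ∪ range v) := htop ▸ Submodule.mem_top
  obtain ⟨a, ha, m, hm, hxa⟩ := (mem_hull_union_range_iff _ v).1 hmem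
  have hsum : ∑ d, (m d + 1) • v d = x - a := by
    simp only [add_smul, one_smul, Finset.sum_add_distrib]
    linear_combination (norm := module) -hxa
  refine ⟨fun d ↦ m d + 1, fun d ↦ by linarith [hm d], fun i ↦ ?_⟩
  have hxi : σ i x = 1 := congrFun hx i
  rw [hsum, map_sub, hxi]
  linarith [ha i]

end Antidominant

theorem cone_generated_by_valuation_cone_and_colors_eq_top_iff_general
    {Q : Type*} [AddCommGroup Q] [Module ℚ Q]
    {ι : Type*} [Fintype ι]
    (σ : ι → Module.Dual ℚ Q)
    (hbasis : ∃ B : Module.Basis ι ℚ (Module.Dual ℚ Q), ∀ i, B i = σ i)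
    {D : Type*} [Fintype D]
    (v : D → Q) :
    (∀ x : Q, ∃ (N : ℕ) (u : Fin N → Q) (c : Fin N → ℚ),
        (∀ k, u k ∈ ({q : Q | ∀ i, σ i q ≤ 0} ∪ Set.range v)) ∧
        (∀ k, 0 ≤ c k) ∧ x = ∑ k, c k • u k) ↔
    (∃ n : D → ℚ, (∀ d, 0 < n d) ∧ ∀ i, 0 < σ i (∑ d, n d • v d)) := by
  obtain ⟨B, hB⟩ := hbasis
  have hσ : LinearIndependent ℚ σ := funext hB ▸ B.linearIndependent
  simp only [← mem_hull_iff_exists_fin, ← Submodule.eq_top_iff']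
  exact ⟨exists_pos_of_hull_antidominantCone_union_range_eq_top σ v hσ,
    fun ⟨_, hn, hpos⟩ ↦ hull_antidominantCone_union_range_eq_top_of_pos σ v (fun d ↦ (hn d).le) hpos⟩

/-- Let `Q` be a finite-dimensional ℚ-vector space, let `σ` be a basis of
the dual space `Q*`, let `𝒱 = {q : ∀ i, σ i q ≤ 0}` be the antidominant cone, and let
`(v d)` be a finite family of vectors in `Q`.  Then every element of `Q` is a nonnegative
rational combination of elements of `𝒱 ∪ {v d}` if and only if there exist strictly
positive rationals `(n d)` with `σ i (∑ d, n d • v d) > 0` for every `i`. -/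
theorem cone_generated_by_valuation_cone_and_colors_eq_top_iff
    {Q : Type*} [AddCommGroup Q] [Module ℚ Q] [FiniteDimensional ℚ Q]
    {ι : Type*} [Fintype ι]
    (σ : ι → Module.Dual ℚ Q)
    (hbasis : ∃ B : Module.Basis ι ℚ (Module.Dual ℚ Q), ∀ i, B i = σ i)
    {D : Type*} [Fintype D]
    (v : D → Q) :
    (∀ x : Q, ∃ (N : ℕ) (u : Fin N → Q) (c : Fin N → ℚ),
        (∀ k, u k ∈ ({q : Q | ∀ i, σ i q ≤ 0} ∪ Set.range v)) ∧
        (∀ k, 0 ≤ c k) ∧ x = ∑ k, c k • u k) ↔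
    (∃ n : D → ℚ, (∀ d, 0 < n d) ∧ ∀ i, 0 < σ i (∑ d, n d • v d)) :=
  cone_generated_by_valuation_cone_and_colors_eq_top_iff_general σ hbasis v
end

section
/- Define η : Π × Π → ℤ by η(α, β) = κ(D_α⁺)(β) if α, β ∈ Σ, and η(α, β) = 0 otherwise, where D_α⁺ denotes the unique element of 𝒟' ∩ 𝒟(α). Then η satisfies the axioms of an admissible map: (AM1) η(α, α) ∈ {0, 1}; (AM2) if η(α, α) = 0 then η(α, β) = η(β, α) = 0 for every β ∈ Π; (AM3) if η(α, β) = 1 then η(α, γ) = η(β, γ) for every γ ∈ Π; (AM4) if η(α, β) < 0 then η(β, α) = 0; (AM5) η(α, β) ≥ ⟨α∨, β⟩ whenever α ≠ β. In particular, η(α, β) ≤ 1 for all α, β, and if all Cartan integers ⟨α∨, β⟩ are ≥ −3 then η takes values in {−3, −2, −1, 0, 1}. -/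
/-!
On each spherical root `α` the functional `η α` is that of the color `D_α⁺` chosen by
`𝒟'`, so (AM1)–(AM4) reduce to bookkeeping with the uniqueness of `D_α⁺`, except for the
part of (AM4) saying that two chosen colors are never negative on each other's roots. That
part comes from the weights of condition (i): the sum `∑ n_D κ(D)(α) > 0` has a single
positive term `n_{D_α⁺}`, so every chosen color negative on `α` has strictly smaller weight
than `D_α⁺`, and mutual negativity would give `n_{D_α⁺} < n_{D_β⁺} < n_{D_α⁺}`.
For (AM5), if `κ(D_α⁺)(β) < ⟨α∨, β⟩ ≤ 0` then by (A2) the partner `D_α⁻` takes value `1`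
on `β`; being outside `𝒟'` it is also the partner of `D_β⁺`, whence `κ(D_β⁺)(α) < 0`, and
`D_α⁺`, `D_β⁺` are negative on each other's roots.
-/

open scoped RealInnerProductSpace

/-- The axioms (AM1)–(AM5) of an admissible map `η` on `S`, with Cartan integers `cart`. -/
structure IsAdmissibleMap {E : Type*} (S : Finset E) (cart η : E → E → ℤ) : Prop where
  apply_self : ∀ α ∈ S, η α α = 0 ∨ η α α = 1
  apply_eq_zero_of_apply_self_eq_zero : ∀ α ∈ S, η α α = 0 → ∀ β ∈ S, η α β = 0 ∧ η β α = 0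
  apply_eq_of_apply_eq_one : ∀ α ∈ S, ∀ β ∈ S, η α β = 1 → ∀ γ ∈ S, η α γ = η β γ
  apply_eq_zero_of_apply_neg : ∀ α ∈ S, ∀ β ∈ S, η α β < 0 → η β α = 0
  cart_le_apply : ∀ α ∈ S, ∀ β ∈ S, α ≠ β → cart α β ≤ η α β

namespace IsAdmissibleMap

variable {E : Type*} {S P : Finset E} {cart η : E → E → ℤ}

theorem of_eq_zero_off (h : IsAdmissibleMap S cart η)
    (hzero : ∀ α β, ¬(α ∈ S ∧ β ∈ S) → η α β = 0)
    (hcart : ∀ α ∈ P, ∀ β ∈ P, α ≠ β → cart α β ≤ 0) : IsAdmissibleMap P cart η where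
  apply_self α _ := by
    by_cases hα : α ∈ S
    · exact h.apply_self α hα
    · exact .inl (hzero α α fun h => hα h.1)
  apply_eq_zero_of_apply_self_eq_zero α _ hαα β _ := by
    by_cases hαβ : α ∈ S ∧ β ∈ S
    · exact h.apply_eq_zero_of_apply_self_eq_zero α hαβ.1 hαα β hαβ.2
    · exact ⟨hzero α β hαβ, hzero β α fun h => hαβ h.symm⟩
  apply_eq_of_apply_eq_one α _ β _ hαβ γ _ := by
    have hS : α ∈ S ∧ β ∈ S := by_contra fun h => by simp [hzero α β h] at hαβ
    by_cases hγ : γ ∈ S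
    · exact h.apply_eq_of_apply_eq_one α hS.1 β hS.2 hαβ γ hγ
    · rw [hzero α γ fun h => hγ h.2, hzero β γ fun h => hγ h.2]
  apply_eq_zero_of_apply_neg α _ β _ hαβ := by
    have hS : α ∈ S ∧ β ∈ S := by_contra fun h => by simp [hzero α β h] at hαβ
    exact h.apply_eq_zero_of_apply_neg α hS.1 β hS.2 hαβ
  cart_le_apply α hα β hβ hne := by
    by_cases hS : α ∈ S ∧ β ∈ S
    · exact h.cart_le_apply α hS.1 β hS.2 hne
    · exact hzero α β hS ▸ hcart α hα β hβ hne

theorem le_apply (h : IsAdmissibleMap S cart η) {m : ℤ} (hm : m ≤ 0)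
    (hcart : ∀ α ∈ S, ∀ β ∈ S, α ≠ β → m ≤ cart α β) : ∀ α ∈ S, ∀ β ∈ S, m ≤ η α β := by
  intro α hα β hβ
  by_cases hne : α = β
  · subst hne
    rcases h.apply_self α hα with _ | _ <;> omega
  · exact (hcart α hα β hβ hne).trans (h.cart_le_apply α hα β hβ hne)

end IsAdmissibleMap

theorem cartan_nonpos_of_inner_nonpos {E : Type*} [NormedAddCommGroup E] [InnerProductSpace ℝ E]
    {α β : E} {c : ℤ} (hαβ : ⟪α, β⟫ ≤ 0) (hc : (c : ℝ) = 2 * ⟪α, β⟫ / ⟪α, α⟫) : c ≤ 0 := by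
  have : (c : ℝ) ≤ 0 :=
    hc ▸ div_nonpos_of_nonpos_of_nonneg (by linarith) real_inner_self_nonneg
  exact_mod_cast this

theorem lt_of_sum_mul_pos {ι : Type*} {s : Finset ι} {n f : ι → ℤ} {i j : ι}
    (hn : ∀ k ∈ s, 0 ≤ n k) (hf : ∀ k ∈ s, k ≠ i → f k ≤ 0) (hsum : 0 < ∑ k ∈ s, n k * f k)
    (hi : i ∈ s) (hfi : f i = 1) (hj : j ∈ s) (hfj : f j < 0) : n j < n i := by
  classical
  have hji : j ≠ i := by rintro rfl; omega
  have hpair : ∑ k ∈ s, n k * f k ≤ ∑ k ∈ {i, j}, n k * f k :=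
    Finset.sum_le_sum_of_subset_of_nonpos' (by simp [Finset.insert_subset_iff, hi, hj])
      fun k hk hkij => mul_nonpos_of_nonneg_of_nonpos (hn k hk) (hf k hk (by simp_all))
  rw [Finset.sum_pair hji.symm, hfi] at hpair
  nlinarith [hn j hj]

/-- Axiom (A2) of a spherical system. -/
def IsColorPairing {E D : Type*} (Sg : Finset E) (cD : Finset D) (κ : D → E → ℤ)
    (cart : E → E → ℤ) : Prop :=
  ∀ α ∈ Sg, ∃ Dp ∈ cD, ∃ Dm ∈ cD, Dp ≠ Dm ∧ κ Dp α = 1 ∧ κ Dm α = 1 ∧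
    (∀ d ∈ cD, κ d α = 1 → d = Dp ∨ d = Dm) ∧ (∀ β ∈ Sg, κ Dp β + κ Dm β = cart α β)

section SphericalSystem

variable {E D : Type*} {Sg : Finset E} {cD cD' : Finset D} {κ : D → E → ℤ}
  {cart : E → E → ℤ} {α β : E}

namespace IsColorPairing

theorem exists_ne (h : IsColorPairing Sg cD κ cart) (hα : α ∈ Sg) (d : D) :
    ∃ e ∈ cD, e ≠ d ∧ κ e α = 1 := by
  obtain ⟨Dp, hDp, Dm, hDm, hne, hp, hm, -⟩ := h α hα
  by_cases hd : Dp = d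
  · exact ⟨Dm, hDm, hd ▸ hne.symm, hm⟩
  · exact ⟨Dp, hDp, hd, hp⟩

theorem add_eq_cart (h : IsColorPairing Sg cD κ cart) (hα : α ∈ Sg) {d e : D}
    (hd : d ∈ cD) (he : e ∈ cD) (hne : d ≠ e) (hdα : κ d α = 1) (heα : κ e α = 1)
    (hβ : β ∈ Sg) : κ d β + κ e β = cart α β := by
  obtain ⟨Dp, -, Dm, -, -, -, -, hmem, hsum⟩ := h α hα
  rcases hmem d hd hdα with rfl | rfl <;> rcases hmem e he heα with rfl | rfl
  · exact absurd rfl hne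
  · exact hsum β hβ
  · exact (add_comm _ _).trans (hsum β hβ)
  · exact absurd rfl hne

end IsColorPairing

theorem kappa_nonpos_of_ne (hκ : ∀ d ∈ cD', ∀ s ∈ Sg, κ d s ≤ 1)
    (hii : ∀ α ∈ Sg, ∃! d, d ∈ cD' ∧ κ d α = 1) (hα : α ∈ Sg) {dα d : D}
    (hdα : dα ∈ cD') (hdαα : κ dα α = 1) (hd : d ∈ cD') (hne : d ≠ dα) : κ d α ≤ 0 := by
  have : κ d α ≠ 1 := fun h => hne ((hii α hα).unique ⟨hd, h⟩ ⟨hdα, hdαα⟩)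
  have := hκ d hd α hα
  omega

theorem kappa_eq_zero_of_kappa_neg (hκ : ∀ d ∈ cD', ∀ s ∈ Sg, κ d s ≤ 1)
    (hi : ∃ n : D → ℤ, (∀ d ∈ cD', 0 < n d) ∧ ∀ s ∈ Sg, 0 < ∑ d ∈ cD', n d * κ d s)
    (hii : ∀ α ∈ Sg, ∃! d, d ∈ cD' ∧ κ d α = 1) (hα : α ∈ Sg) (hβ : β ∈ Sg) {dα dβ : D}
    (hdα : dα ∈ cD') (hdβ : dβ ∈ cD') (hdαα : κ dα α = 1) (hdββ : κ dβ β = 1)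
    (hneg : κ dα β < 0) : κ dβ α = 0 := by
  obtain ⟨n, hn, hsum⟩ := hi
  have weight_lt : ∀ {γ : E} {c c' : D}, γ ∈ Sg → c ∈ cD' → κ c γ = 1 → c' ∈ cD' →
      κ c' γ < 0 → n c' < n c := fun hγ hc hcγ hc' hc'γ =>
    lt_of_sum_mul_pos (fun k hk => (hn k hk).le)
      (fun k hk hkc => kappa_nonpos_of_ne hκ hii hγ hc hcγ hk hkc) (hsum _ hγ) hc hcγ hc' hc'γ
  have hne : dβ ≠ dα := by rintro rfl; omega
  have hnonpos := kappa_nonpos_of_ne hκ hii hα hdα hdαα hdβ hne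
  by_contra h
  exact (weight_lt hβ hdβ hdββ hdα hneg).asymm (weight_lt hα hdα hdαα hdβ (by omega))

theorem cart_le_kappa (hκ : ∀ d ∈ cD, ∀ s ∈ Sg, κ d s ≤ 1) (hpair : IsColorPairing Sg cD κ cart)
    (hsub : cD' ⊆ cD)
    (hi : ∃ n : D → ℤ, (∀ d ∈ cD', 0 < n d) ∧ ∀ s ∈ Sg, 0 < ∑ d ∈ cD', n d * κ d s)
    (hii : ∀ α ∈ Sg, ∃! d, d ∈ cD' ∧ κ d α = 1)
    (hcart : ∀ α ∈ Sg, ∀ β ∈ Sg, α ≠ β → cart α β ≤ 0) (hα : α ∈ Sg) (hβ : β ∈ Sg)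
    (hne : α ≠ β) {dα : D} (hdα : dα ∈ cD') (hdαα : κ dα α = 1) : cart α β ≤ κ dα β := by
  by_contra! hlt
  obtain ⟨e, he, hedα, heα⟩ := hpair.exists_ne hα dα
  have heβ : κ e β = 1 := by
    have := hpair.add_eq_cart hα (hsub hdα) he hedα.symm hdαα heα hβ
    have := hκ e he β hβ
    omega
  obtain ⟨dβ, ⟨hdβ, hdββ⟩, -⟩ := hii β hβ
  have hedβ : e ≠ dβ := fun h => hedα ((hii α hα).unique ⟨h ▸ hdβ, heα⟩ ⟨hdα, hdαα⟩)
  have hsumβ := hpair.add_eq_cart hβ (hsub hdβ) he hedβ.symm hdββ heβ hα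
  have hzero := kappa_eq_zero_of_kappa_neg (fun d hd => hκ d (hsub hd)) hi hii hα hβ hdα hdβ
    hdαα hdββ (by linarith [hcart α hα β hβ hne])
  linarith [hcart β hβ α hα hne.symm]

theorem isAdmissibleMap_of_chosen_colors (hκ : ∀ d ∈ cD, ∀ s ∈ Sg, κ d s ≤ 1)
    (hpair : IsColorPairing Sg cD κ cart) (hsub : cD' ⊆ cD)
    (hi : ∃ n : D → ℤ, (∀ d ∈ cD', 0 < n d) ∧ ∀ s ∈ Sg, 0 < ∑ d ∈ cD', n d * κ d s)
    (hii : ∀ α ∈ Sg, ∃! d, d ∈ cD' ∧ κ d α = 1)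
    (hcart : ∀ α ∈ Sg, ∀ β ∈ Sg, α ≠ β → cart α β ≤ 0) {η : E → E → ℤ}
    (hη : ∀ α ∈ Sg, ∀ β ∈ Sg, ∀ d ∈ cD', κ d α = 1 → η α β = κ d β) :
    IsAdmissibleMap Sg cart η := by
  have chosen : ∀ α ∈ Sg, ∃ d ∈ cD', κ d α = 1 := fun α hα => (hii α hα).exists
  have apply_self : ∀ α ∈ Sg, η α α = 1 := fun α hα =>
    let ⟨d, hd, hdα⟩ := chosen α hα; hdα ▸ hη α hα α hα d hd hdα
  refine ⟨fun α hα => .inr (apply_self α hα), fun α hα h => by simp [apply_self α hα] at h,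
    fun α hα β hβ hαβ γ hγ => ?_, fun α hα β hβ hαβ => ?_,
    fun α hα β hβ hne => ?_⟩ <;> obtain ⟨dα, hdα, hdαα⟩ := chosen α hα
  · rw [hη α hα β hβ dα hdα hdαα] at hαβ
    rw [hη α hα γ hγ dα hdα hdαα, hη β hβ γ hγ dα hdα hαβ]
  · obtain ⟨dβ, hdβ, hdββ⟩ := chosen β hβ
    rw [hη α hα β hβ dα hdα hdαα] at hαβ
    rw [hη β hβ α hα dβ hdβ hdββ]
    exact kappa_eq_zero_of_kappa_neg (fun d hd => hκ d (hsub hd)) hi hii hα hβ hdα hdβ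
      hdαα hdββ hαβ
  · exact hη α hα β hβ dα hdα hdαα ▸ cart_le_kappa hκ hpair hsub hi hii hcart hα hβ hne hdα hdαα

theorem le_one_of_chosen_colors (hκ : ∀ d ∈ cD', ∀ s ∈ Sg, κ d s ≤ 1)
    (hii : ∀ α ∈ Sg, ∃! d, d ∈ cD' ∧ κ d α = 1) {η : E → E → ℤ}
    (hη : ∀ α ∈ Sg, ∀ β ∈ Sg, ∀ d ∈ cD', κ d α = 1 → η α β = κ d β)
    (hzero : ∀ α β : E, ¬(α ∈ Sg ∧ β ∈ Sg) → η α β = 0) (α β : E) : η α β ≤ 1 := by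
  by_cases hS : α ∈ Sg ∧ β ∈ Sg
  · obtain ⟨d, ⟨hd, hdα⟩, -⟩ := hii α hS.1
    exact hη α hS.1 β hS.2 d hd hdα ▸ hκ d hd β hS.2
  · exact hzero α β hS ▸ zero_le_one

end SphericalSystem

theorem spherical_system_gives_admissible_map_general
    {E : Type*} [NormedAddCommGroup E] [InnerProductSpace ℝ E]
    (P : Finset E)
    (hobtuse : ∀ α ∈ P, ∀ β ∈ P, α ≠ β → ⟪α, β⟫ ≤ 0)
    (cart : E → E → ℤ)
    (hcart : ∀ α ∈ P, ∀ β ∈ P, (cart α β : ℝ) = 2 * ⟪α, β⟫ / ⟪α, α⟫)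
    (Sg : Finset E) (hSgP : Sg ⊆ P)
    {D : Type*} (cD : Finset D) (κ : D → E → ℤ)
    (a1 : ∀ d ∈ cD, ∀ s ∈ Sg, κ d s ≤ 1)
    (a2 : ∀ α ∈ Sg, ∃ Dp ∈ cD, ∃ Dm ∈ cD, Dp ≠ Dm ∧ κ Dp α = 1 ∧ κ Dm α = 1 ∧
        (∀ d ∈ cD, κ d α = 1 → d = Dp ∨ d = Dm) ∧
        (∀ β ∈ Sg, κ Dp β + κ Dm β = cart α β))
    (cD' : Finset D) (hD'sub : cD' ⊆ cD)
    (hi : ∃ nD : D → ℤ, (∀ d ∈ cD', 0 < nD d) ∧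
        ∀ s ∈ Sg, 0 < ∑ d ∈ cD', nD d * κ d s)
    (hii : ∀ α ∈ Sg, ∃! d, d ∈ cD' ∧ κ d α = 1)
    (η : E → E → ℤ)
    (hη1 : ∀ α ∈ Sg, ∀ β ∈ Sg, ∀ d ∈ cD', κ d α = 1 → η α β = κ d β)
    (hη2 : ∀ α β : E, ¬(α ∈ Sg ∧ β ∈ Sg) → η α β = 0) :
    (∀ α ∈ P, η α α = 0 ∨ η α α = 1) ∧
    (∀ α ∈ P, η α α = 0 → ∀ β ∈ P, η α β = 0 ∧ η β α = 0) ∧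
    (∀ α ∈ P, ∀ β ∈ P, η α β = 1 → ∀ γ ∈ P, η α γ = η β γ) ∧
    (∀ α ∈ P, ∀ β ∈ P, η α β < 0 → η β α = 0) ∧
    (∀ α ∈ P, ∀ β ∈ P, α ≠ β → cart α β ≤ η α β) ∧
    (∀ α ∈ P, ∀ β ∈ P, η α β ≤ 1) ∧
    ((∀ α ∈ P, ∀ β ∈ P, α ≠ β → -3 ≤ cart α β) →
      ∀ α ∈ P, ∀ β ∈ P, -3 ≤ η α β ∧ η α β ≤ 1) := by
  have hcart_nonpos : ∀ α ∈ P, ∀ β ∈ P, α ≠ β → cart α β ≤ 0 := fun α hα β hβ hne =>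
    cartan_nonpos_of_inner_nonpos (hobtuse α hα β hβ hne) (hcart α hα β hβ)
  have hSg : IsAdmissibleMap Sg cart η :=
    isAdmissibleMap_of_chosen_colors a1 a2 hD'sub hi hii
      (fun α hα β hβ => hcart_nonpos α (hSgP hα) β (hSgP hβ)) hη1
  have hP : IsAdmissibleMap P cart η := hSg.of_eq_zero_off hη2 hcart_nonpos
  have hle : ∀ α β, η α β ≤ 1 :=
    le_one_of_chosen_colors (fun d hd => a1 d (hD'sub hd)) hii hη1 hη2
  exact ⟨hP.apply_self, hP.apply_eq_zero_of_apply_self_eq_zero, hP.apply_eq_of_apply_eq_one,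
    hP.apply_eq_zero_of_apply_neg, hP.cart_le_apply, fun α _ β _ => hle α β,
    fun h3 α hα β hβ => ⟨hP.le_apply (by norm_num) h3 α hα β hβ, hle α β⟩⟩

/-- Let `P` be the set of simple roots, `Sg ⊆ P` the set of spherical
roots of a strongly solvable spherical system with colors `cD` and functionals `κ`,
satisfying axioms (A1)–(A3), and let `cD' ⊆ cD` satisfy conditions (i) and (ii) of the
strong solvability criterion.  Define `η α β = κ (D_α⁺) β` for `α, β ∈ Sg` (where
`D_α⁺` is the unique element of `cD' ∩ 𝒟(α)`) and `η α β = 0` otherwise.  Then `η`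
satisfies the axioms (AM1)–(AM5) of an admissible map; in particular `η α β ≤ 1`
always, and if all Cartan integers are ≥ −3 then `η` takes values in
`{−3, −2, −1, 0, 1}`. -/
theorem spherical_system_gives_admissible_map
    {E : Type*} [NormedAddCommGroup E] [InnerProductSpace ℝ E]
    (P : Finset E)
    (h0 : ∀ α ∈ P, α ≠ (0 : E))
    (hli : LinearIndependent ℝ (fun a : P => (a : E)))
    (hobtuse : ∀ α ∈ P, ∀ β ∈ P, α ≠ β → ⟪α, β⟫ ≤ 0)
    (cart : E → E → ℤ)
    (hcart : ∀ α ∈ P, ∀ β ∈ P, (cart α β : ℝ) = 2 * ⟪α, β⟫ / ⟪α, α⟫)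
    (Sg : Finset E) (hSgP : Sg ⊆ P)
    {D : Type*} (cD : Finset D) (κ : D → E → ℤ)
    (a1 : ∀ d ∈ cD, ∀ s ∈ Sg, κ d s ≤ 1)
    (a2 : ∀ α ∈ Sg, ∃ Dp ∈ cD, ∃ Dm ∈ cD, Dp ≠ Dm ∧ κ Dp α = 1 ∧ κ Dm α = 1 ∧
        (∀ d ∈ cD, κ d α = 1 → d = Dp ∨ d = Dm) ∧
        (∀ β ∈ Sg, κ Dp β + κ Dm β = cart α β))
    (a3 : ∀ d ∈ cD, ∃ α ∈ Sg, κ d α = 1)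
    (cD' : Finset D) (hD'sub : cD' ⊆ cD)
    (hi : ∃ nD : D → ℤ, (∀ d ∈ cD', 0 < nD d) ∧
        ∀ s ∈ Sg, 0 < ∑ d ∈ cD', nD d * κ d s)
    (hii : ∀ α ∈ Sg, ∃! d, d ∈ cD' ∧ κ d α = 1)
    (η : E → E → ℤ)
    (hη1 : ∀ α ∈ Sg, ∀ β ∈ Sg, ∀ d ∈ cD', κ d α = 1 → η α β = κ d β)
    (hη2 : ∀ α β : E, ¬(α ∈ Sg ∧ β ∈ Sg) → η α β = 0) :
    (∀ α ∈ P, η α α = 0 ∨ η α α = 1) ∧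
    (∀ α ∈ P, η α α = 0 → ∀ β ∈ P, η α β = 0 ∧ η β α = 0) ∧
    (∀ α ∈ P, ∀ β ∈ P, η α β = 1 → ∀ γ ∈ P, η α γ = η β γ) ∧
    (∀ α ∈ P, ∀ β ∈ P, η α β < 0 → η β α = 0) ∧
    (∀ α ∈ P, ∀ β ∈ P, α ≠ β → cart α β ≤ η α β) ∧
    (∀ α ∈ P, ∀ β ∈ P, η α β ≤ 1) ∧
    ((∀ α ∈ P, ∀ β ∈ P, α ≠ β → -3 ≤ cart α β) →
      ∀ α ∈ P, ∀ β ∈ P, -3 ≤ η α β ∧ η α β ≤ 1) :=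
  spherical_system_gives_admissible_map_general P hobtuse cart hcart Sg hSgP cD κ a1 a2 cD' hD'sub
    hi hii η hη1 hη2
end
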